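/- arXiv:2604.15534 — 10 statements merged into one kernel-verified Lean document; each statement's English description precedes it below -/
import Mathlib

section
/- In Q_4, the set S consisting of the six vertices 0000, 1100, 0011, 0110, 1001, 1111 percolates under the 3-neighbour bootstrap process; in particular m(Q_4;3) ≤ 6. -/
open Finset

/-- One step of the r-neighbour bootstrap process on the d-dimensional hypercube
(vertices: `Fin d → Bool`, adjacency: Hamming distance 1). -/
def bootStep (d r : ℕ) (A : Finset (Fin d → Bool)) : Finset (Fin d → Bool) :=
  A ∪ Finset.univ.filter (fun v =>
    r ≤ ((Finset.univ.filter (fun w => hammingDist v w = 1)) ∩ A).card)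

/-- `A` percolates under the r-neighbour bootstrap process on `Q_d`. -/
def Percolates (d r : ℕ) (A : Finset (Fin d → Bool)) : Prop :=
  ∃ t : ℕ, (bootStep d r)^[t] A = Finset.univ

/-- `m(Q_d; r)`: minimum cardinality of a percolating set. -/
noncomputable def mQ (d r : ℕ) : ℕ :=
  sInf {n : ℕ | ∃ A : Finset (Fin d → Bool), A.card = n ∧ Percolates d r A}

/-- The six listed vertices of `Q_4` percolate under the 3-neighbour bootstrap process;
in particular `m(Q_4; 3) ≤ 6`. -/
theorem stmt3 :
    Percolates 4 3 ({
    ![false, false, false, false], ![true, true, false, false], ![false, false, true, true],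
    ![false, true, true, false], ![true, false, false, true], ![true, true, true, true]} : Finset (Fin 4 → Bool)) ∧ mQ 4 3 ≤ 6 := by
  have hp : Percolates 4 3 ({
    ![false, false, false, false], ![true, true, false, false], ![false, false, true, true],
    ![false, true, true, false], ![true, false, false, true], ![true, true, true, true]} :
      Finset (Fin 4 → Bool)) := ⟨3, by decide⟩
  refine ⟨hp, Nat.sInf_le ⟨_, by decide, hp⟩⟩
end

section
/- For even d ≥ 2, the set S_2^d = {0^d} ∪ {e_{2i-1} + e_{2i} : 1 ≤ i ≤ d/2}, where e_j denotes the j-th standard basis vector of {0,1}^d, has cardinality d/2 + 1 and percolates under the 2-neighbour bootstrap process on Q_d. -/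
open Finset

/-- The set `S_2^d = {0^d} ∪ {e_{2i-1} + e_{2i} : 1 ≤ i ≤ d/2}` (0-indexed below). -/
def S2set (d : ℕ) : Finset (Fin d → Bool) :=
  insert (fun _ => false)
    ((Finset.range (d / 2)).image
      (fun i => fun j : Fin d => decide (j.val = 2 * i ∨ j.val = 2 * i + 1)))

-- auxiliary

def wt {d : ℕ} (v : Fin d → Bool) : ℕ := (univ.filter (fun j => v j = true)).card

lemma hd_filter {d : ℕ} (v w : Fin d → Bool) :
    hammingDist v w = (univ.filter (fun j => v j ≠ w j)).card := rfl

lemma subset_bootStep (d r : ℕ) (A : Finset (Fin d → Bool)) : A ⊆ bootStep d r A :=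
  subset_union_left

lemma mem_bootStep_of_two {d : ℕ} (A : Finset (Fin d → Bool)) (v : Fin d → Bool)
    (h : 2 ≤ ((univ.filter (fun w => hammingDist v w = 1)) ∩ A).card) :
    v ∈ bootStep d 2 A :=
  mem_union.2 (Or.inr (mem_filter.2 ⟨mem_univ _, h⟩))

lemma dist_update {d : ℕ} (v : Fin d → Bool) (a : Fin d) (h : v a = true) :
    hammingDist v (Function.update v a false) = 1 := by
  rw [hd_filter]
  have : (univ.filter (fun j => v j ≠ Function.update v a false j)) = {a} := by
    ext j
    simp only [mem_filter, mem_univ, true_and, mem_singleton]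
    rcases eq_or_ne j a with rfl | hj
    · simp [Function.update_self, h]
    · simp [Function.update_of_ne hj, hj]
  rw [this, card_singleton]

lemma wt_update {d : ℕ} (v : Fin d → Bool) (a : Fin d) (h : v a = true) :
    wt (Function.update v a false) = wt v - 1 := by
  unfold wt
  have : (univ.filter (fun j => Function.update v a false j = true))
      = (univ.filter (fun j => v j = true)).erase a := by
    ext j
    simp only [mem_filter, mem_univ, true_and, mem_erase]
    rcases eq_or_ne j a with rfl | hj
    · simp [Function.update_self]
    · simp [Function.update_of_ne hj, hj]
  rw [this, card_erase_of_mem (by simp [h])]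

lemma wt_le {d : ℕ} (v : Fin d → Bool) : wt v ≤ d := by
  calc wt v ≤ (univ : Finset (Fin d)).card := card_le_card (filter_subset _ _)
  _ = d := by simp

lemma key (d : ℕ) (hd : 2 ≤ d) (hev : d % 2 = 0) :
    ∀ t : ℕ, 1 ≤ t → ∀ v : Fin d → Bool, wt v ≤ t → v ∈ (bootStep d 2)^[t] (S2set d) := by
  intro t
  induction t with
  | zero => omega
  | succ t ih =>
    intro _ v hv
    rcases Nat.lt_or_ge 1 (t+1) with ht | ht
    · -- t ≥ 1
      have ht1 : 1 ≤ t := by omega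
      rw [Function.iterate_succ_apply']
      rcases le_or_gt (wt v) t with hle | hgt
      · exact subset_bootStep _ _ _ (ih ht1 v hle)
      · have hw : wt v = t + 1 := by omega
        have h2 : 1 < (univ.filter (fun j => v j = true)).card := by
          unfold wt at hw; omega
        obtain ⟨a, ha, b, hb, hab⟩ := one_lt_card.mp h2
        simp only [mem_filter] at ha hb
        apply mem_bootStep_of_two
        have hmem : ∀ c : Fin d, v c = true →
            Function.update v c false ∈ (univ.filter (fun w => hammingDist v w = 1))
              ∩ (bootStep d 2)^[t] (S2set d) := by
          intro c hc
          refine mem_inter.2 ⟨mem_filter.2 ⟨mem_univ _, dist_update v c hc⟩, ?_⟩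
          apply ih ht1
          rw [wt_update v c hc, hw]; omega
        have hne : Function.update v a false ≠ Function.update v b false := by
          intro h
          have := congrFun h b
          rw [Function.update_of_ne (Ne.symm hab), Function.update_self] at this
          rw [hb.2] at this; simp at this
        calc (2 : ℕ) = ({Function.update v a false, Function.update v b false} :
              Finset (Fin d → Bool)).card := by rw [card_pair hne]
          _ ≤ _ := card_le_card (by
              intro x hx
              rcases mem_insert.mp hx with rfl | hx
              · exact hmem a ha.2
              · rw [mem_singleton.mp hx]; exact hmem b hb.2)
    · -- t+1 = 1
      have ht0 : t = 0 := by omega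
      subst ht0
      rw [Function.iterate_one]
      rcases Nat.eq_zero_or_pos (wt v) with h0 | h1
      · have hv0 : v = fun _ => false := by
          funext j
          by_contra hj
          have hj' : v j = true := by cases h : v j <;> simp_all
          have : j ∈ univ.filter (fun j => v j = true) := by simp [hj']
          rw [Finset.card_eq_zero.mp h0] at this
          exact absurd this (notMem_empty _)
        apply subset_bootStep
        rw [hv0]; exact mem_insert_self _ _
      · -- wt v = 1
        have hw : wt v = 1 := by omega
        obtain ⟨j, hj⟩ := card_eq_one.mp hw
        have hvj : v j = true := by
          have : j ∈ univ.filter (fun k => v k = true) := by rw [hj]; exact mem_singleton_self _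
          simpa using this
        have hvo : ∀ k, k ≠ j → v k = false := by
          intro k hk
          by_contra hkk
          have hk' : v k = true := by cases h : v k <;> simp_all
          have : k ∈ univ.filter (fun k => v k = true) := by simp [hk']
          rw [hj] at this
          exact hk (mem_singleton.mp this)
        set i := j.val / 2 with hi
        have hid : i < d / 2 := Nat.div_lt_div_of_lt_of_dvd (Nat.dvd_of_mod_eq_zero hev) j.isLt
        have h2i : 2 * i + 1 < d := by omega
        set p : Fin d → Bool := fun k => decide (k.val = 2 * i ∨ k.val = 2 * i + 1) with hp
        have hpS : p ∈ S2set d :=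
          mem_insert.2 (Or.inr (mem_image.2 ⟨i, mem_range.2 hid, rfl⟩))
        have hjcase : j.val = 2 * i ∨ j.val = 2 * i + 1 := by omega
        have hpj : p j = true := by simp [hp, hjcase]
        -- partner coordinate
        set j' : Fin d := ⟨2 * i + 1 - j.val % 2, by omega⟩ with hj'
        have hj'val : j'.val = 2 * i ∨ j'.val = 2 * i + 1 := by
          simp only [hj']; omega
        have hjj' : j ≠ j' := by
          intro h
          have : j.val = j'.val := by rw [h]
          simp only [hj'] at this; omega
        have hpj' : p j' = true := by simp [hp, hj'val]
        have hz : (fun _ => false : Fin d → Bool) ∈ S2set d := mem_insert_self _ _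
        have hdz : hammingDist v (fun _ => false) = 1 := by
          rw [hd_filter]
          have : (univ.filter (fun k => v k ≠ false)) = {j} := by
            rw [← hj]; apply filter_congr; intro k _
            simp
          rw [this, card_singleton]
        have hdp : hammingDist v p = 1 := by
          rw [hd_filter]
          have : (univ.filter (fun k => v k ≠ p k)) = {j'} := by
            ext k
            simp only [mem_filter, mem_univ, true_and, mem_singleton]
            rcases eq_or_ne k j with rfl | hkj
            · simp only [hvj, hpj, ne_eq, not_true_eq_false, false_iff]; exact hjj'
            · rcases eq_or_ne k j' with rfl | hkj'
              · simp [hvo _ hkj, hpj']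
              · have hpk : p k = false := by
                  simp only [hp, decide_eq_false_iff_not]
                  push_neg
                  constructor
                  · intro h
                    rcases hjcase with h1 | h1
                    · exact hkj (Fin.ext (h.trans h1.symm))
                    · rcases hj'val with h2 | h2
                      · exact hkj' (Fin.ext (h.trans h2.symm))
                      · omega
                  · intro h
                    rcases hjcase with h1 | h1
                    · rcases hj'val with h2 | h2
                      · omega
                      · exact hkj' (Fin.ext (h.trans h2.symm))
                    · exact hkj (Fin.ext (h.trans h1.symm))
                simp [hvo _ hkj, hpk, hkj']
          rw [this, card_singleton]
        have hpne : p ≠ (fun _ => false : Fin d → Bool) := by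
          intro h
          have := congrFun h j
          rw [hpj] at this
          simp at this
        apply mem_bootStep_of_two
        calc (2:ℕ) = ({p, (fun _ => false : Fin d → Bool)} :
              Finset (Fin d → Bool)).card := by rw [card_pair hpne]
          _ ≤ _ := card_le_card (by
              intro x hx
              rcases mem_insert.mp hx with rfl | hx
              · exact mem_inter.2 ⟨mem_filter.2 ⟨mem_univ _, hdp⟩, hpS⟩
              · rw [mem_singleton.mp hx]
                exact mem_inter.2 ⟨mem_filter.2 ⟨mem_univ _, hdz⟩, hz⟩)

/-- For even `d ≥ 2`, `S_2^d` has cardinality `d/2 + 1` and percolates under the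
2-neighbour bootstrap process on `Q_d`. -/
theorem stmt4 (d : ℕ) (hd : 2 ≤ d) (hev : d % 2 = 0) :
    (S2set d).card = d / 2 + 1 ∧ Percolates d 2 (S2set d) := by
  constructor
  · unfold S2set
    rw [card_insert_of_notMem, card_image_of_injOn]
    · simp
    · intro i hi i' hi' h
      simp only [mem_coe, mem_range] at hi hi'
      have h2i : 2 * i < d := by omega
      have := congrFun h ⟨2 * i, h2i⟩
      simp at this
      omega
    · intro h
      rw [mem_image] at h
      obtain ⟨i, hi, h⟩ := h
      rw [mem_range] at hi
      have h2i : 2 * i < d := by omega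
      have := congrFun h ⟨2 * i, h2i⟩
      simp at this
  · exact ⟨d, eq_univ_of_forall (fun v => key d hd hev d (by omega) v (wt_le v))⟩
end

section
/- For all d ≥ 2, m(Q_d;2) ≤ ⌈d/2⌉ + 1; that is, there is a percolating set for the 2-neighbour bootstrap process on the d-dimensional hypercube of cardinality ⌈d/2⌉ + 1. -/
open Finset

def Inf2 (d : ℕ) (A : Finset (Fin d → Bool)) (v : Fin d → Bool) : Prop :=
  ∃ t, v ∈ (bootStep d 2)^[t] A

lemma subset_iterate (d r : ℕ) (A : Finset (Fin d → Bool)) (n : ℕ) :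
    A ⊆ (bootStep d r)^[n] A := by
  induction n with
  | zero => simp
  | succ n ih =>
    rw [Function.iterate_succ_apply']
    exact ih.trans (subset_bootStep d r _)

lemma iterate_mono (d r : ℕ) (A : Finset (Fin d → Bool)) {s t : ℕ} (h : s ≤ t) :
    (bootStep d r)^[s] A ⊆ (bootStep d r)^[t] A := by
  have : t = (t - s) + s := by omega
  rw [this, Function.iterate_add_apply]
  exact subset_iterate d r _ _

lemma dist_single {d : ℕ} (v w : Fin d → Bool) (j : Fin d) (hne : v j ≠ w j)
    (h : ∀ i, i ≠ j → v i = w i) : hammingDist v w = 1 := by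
  have hf : (Finset.univ.filter fun i => v i ≠ w i) = {j} := by
    ext i
    simp only [mem_filter, mem_univ, true_and, mem_singleton]
    constructor
    · intro hi; by_contra hij; exact hi (h i hij)
    · rintro rfl; exact hne
  simp [hammingDist, hf]

lemma inf_of_two {d : ℕ} {A : Finset (Fin d → Bool)} {v w1 w2 : Fin d → Bool}
    (hne : w1 ≠ w2) (h1 : hammingDist v w1 = 1) (h2 : hammingDist v w2 = 1)
    (i1 : Inf2 d A w1) (i2 : Inf2 d A w2) : Inf2 d A v := by
  obtain ⟨t1, m1⟩ := i1
  obtain ⟨t2, m2⟩ := i2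
  refine ⟨max t1 t2 + 1, ?_⟩
  rw [Function.iterate_succ_apply']
  apply mem_union_right
  rw [mem_filter]
  refine ⟨mem_univ _, ?_⟩
  have hsub : ({w1, w2} : Finset (Fin d → Bool)) ⊆
      (Finset.univ.filter (fun w => hammingDist v w = 1)) ∩ ((bootStep d 2)^[max t1 t2] A) := by
    intro x hx
    rcases mem_insert.1 hx with rfl | hx
    · exact mem_inter.2 ⟨mem_filter.2 ⟨mem_univ _, h1⟩, iterate_mono d 2 A (le_max_left _ _) m1⟩
    · rw [mem_singleton] at hx; subst hx
      exact mem_inter.2 ⟨mem_filter.2 ⟨mem_univ _, h2⟩, iterate_mono d 2 A (le_max_right _ _) m2⟩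
  calc (2 : ℕ) = ({w1, w2} : Finset (Fin d → Bool)).card := by
        rw [card_insert_of_notMem (by simpa using hne), card_singleton]
    _ ≤ _ := card_le_card hsub

lemma layer {d : ℕ} (A : Finset (Fin d → Bool)) (c : ℕ) (hc : c < d)
    (hsub : ∀ v : Fin d → Bool, (∀ j : Fin d, c ≤ j.val → v j = false) → Inf2 d A v)
    (he : Inf2 d A (fun j => decide (j.val = c))) :
    ∀ v : Fin d → Bool, (∀ j : Fin d, c < j.val → v j = false) → Inf2 d A v := by
  have key : ∀ n (v : Fin d → Bool), (∀ j : Fin d, c < j.val → v j = false) →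
      v ⟨c, hc⟩ = true →
      (Finset.univ.filter fun j : Fin d => v j = true ∧ j.val ≠ c).card = n → Inf2 d A v := by
    intro n
    induction n with
    | zero =>
      intro v hv hvc hcard
      rw [card_eq_zero] at hcard
      have hv' : ∀ j : Fin d, j.val ≠ c → v j = false := by
        intro j hj
        by_contra h
        have hmem : j ∈ Finset.univ.filter fun j : Fin d => v j = true ∧ j.val ≠ c :=
          mem_filter.2 ⟨mem_univ _, by simpa using h, hj⟩
        rw [hcard] at hmem
        exact absurd hmem (notMem_empty _)
      have hve : v = fun j => decide (j.val = c) := by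
        funext j
        by_cases h : j.val = c
        · have : j = ⟨c, hc⟩ := Fin.ext h
          subst this
          simp [hvc]
        · simp [hv' j h, h]
      rw [hve]; exact he
    | succ n ih =>
      intro v hv hvc hcard
      have hne : (Finset.univ.filter fun j : Fin d => v j = true ∧ j.val ≠ c).Nonempty := by
        rw [← card_pos, hcard]; omega
      obtain ⟨j, hj⟩ := hne
      rw [mem_filter] at hj
      obtain ⟨-, hjt, hjc⟩ := hj
      have hjlt : j.val < c := by
        rcases lt_trichotomy j.val c with h | h | h
        · exact h
        · exact absurd h hjc
        · exact absurd hjt (by simp [hv j h])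
      have hjne : j ≠ ⟨c, hc⟩ := fun h => hjc (by rw [h])
      set w1 := Function.update v j false with hw1
      set w2 := Function.update v ⟨c, hc⟩ false with hw2
      apply inf_of_two (w1 := w1) (w2 := w2)
      · intro h
        have := congrFun h ⟨c, hc⟩
        rw [hw1, hw2] at this
        rw [Function.update_of_ne (Ne.symm hjne), Function.update_self, hvc] at this
        exact Bool.true_eq_false ▸ (by simp at this)
      · exact dist_single v w1 j (by simp [hw1, hjt]) (fun i hi => by simp [hw1, Function.update_of_ne hi])
      · exact dist_single v w2 ⟨c, hc⟩ (by simp [hw2, hvc]) (fun i hi => by simp [hw2, Function.update_of_ne hi])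
      · apply ih w1
        · intro j' hj'
          have hne' : j' ≠ j := fun h => by
            rw [h] at hj'; omega
          rw [hw1, Function.update_of_ne hne']
          exact hv j' hj'
        · rw [hw1, Function.update_of_ne (Ne.symm hjne)]
          exact hvc
        · have hset : (Finset.univ.filter fun i : Fin d => w1 i = true ∧ i.val ≠ c) =
              (Finset.univ.filter fun i : Fin d => v i = true ∧ i.val ≠ c).erase j := by
            ext i
            simp only [mem_filter, mem_univ, true_and, mem_erase]
            by_cases h : i = j
            · subst h
              simp [hw1]
            · rw [hw1, Function.update_of_ne h]
              tauto
          rw [hset, card_erase_of_mem (mem_filter.2 ⟨mem_univ _, hjt, hjc⟩), hcard]; omega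
      · apply hsub w2
        intro j' hj'
        by_cases h : j'.val = c
        · have : j' = ⟨c, hc⟩ := Fin.ext h
          rw [this, hw2, Function.update_self]
        · have : c < j'.val := lt_of_le_of_ne hj' (Ne.symm h)
          rw [hw2, Function.update_of_ne (fun he => h (by rw [he]))]
          exact hv j' this
  intro v hv
  by_cases h : v ⟨c, hc⟩ = true
  · exact key _ v hv h rfl
  · apply hsub v
    intro j hj
    rcases eq_or_lt_of_le hj with h' | h'
    · have : j = ⟨c, hc⟩ := Fin.ext h'.symm
      rw [this]; exact Bool.not_eq_true _ |>.mp h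
    · exact hv j h'

def zVec (d : ℕ) : Fin d → Bool := fun _ => false

def pairVec (d i : ℕ) : Fin d → Bool := fun j => decide (j.val = 2 * i ∨ j.val = 2 * i + 1)

def seedSet (d : ℕ) : Finset (Fin d → Bool) :=
  insert (zVec d) ((Finset.range ((d + 1) / 2)).image (pairVec d))

lemma z_mem (d : ℕ) : Inf2 d (seedSet d) (zVec d) := ⟨0, mem_insert_self _ _⟩

lemma pair_mem (d i : ℕ) (hi : i < (d + 1) / 2) : Inf2 d (seedSet d) (pairVec d i) :=
  ⟨0, mem_insert_of_mem (mem_image.2 ⟨i, mem_range.2 hi, rfl⟩)⟩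

lemma e_mem (d c : ℕ) (hc : c < d) :
    Inf2 d (seedSet d) (fun j => decide (j.val = c)) := by
  set i := c / 2 with hi
  have him : Inf2 d (seedSet d) (pairVec d i) := pair_mem d i (by omega)
  by_cases hpar : c % 2 = 0
  · have h2i : 2 * i = c := by omega
    by_cases hlt : c + 1 < d
    · apply inf_of_two (w1 := zVec d) (w2 := pairVec d i) _ _ _ (z_mem d) him
      · intro h
        have := congrFun h ⟨c, hc⟩
        simp only [zVec, pairVec, Fin.val_mk] at this
        rw [eq_comm, decide_eq_false_iff_not] at this
        exact this (Or.inl h2i.symm)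
      · apply dist_single _ _ ⟨c, hc⟩ (by simp [zVec])
        intro i' hi'
        have : i'.val ≠ c := fun h => hi' (Fin.ext h)
        simp [zVec, this]
      · apply dist_single _ _ ⟨c + 1, hlt⟩
        · show decide ((c + 1 : ℕ) = c) ≠ pairVec d i ⟨c + 1, hlt⟩
          simp only [pairVec, Fin.val_mk]
          rw [decide_eq_false (by omega : ¬ (c + 1 = c)),
            decide_eq_true (show c + 1 = 2 * i ∨ c + 1 = 2 * i + 1 from Or.inr (by omega))]
          simp
        · intro i' hi'
          have h' : i'.val ≠ c + 1 := fun h => hi' (Fin.ext h)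
          show decide (i'.val = c) = pairVec d i i'
          simp only [pairVec]
          exact decide_eq_decide.2 (by omega)
    · have heq : pairVec d i = fun j : Fin d => decide (j.val = c) := by
        funext j
        have hj : j.val < d := j.isLt
        simp only [pairVec]
        exact decide_eq_decide.2 (by omega)
      rw [← heq]
      exact him
  · have h2i : 2 * i + 1 = c := by omega
    have h2id : 2 * i < d := by omega
    apply inf_of_two (w1 := zVec d) (w2 := pairVec d i) _ _ _ (z_mem d) him
    · intro h
      have := congrFun h ⟨2 * i, h2id⟩
      simp only [zVec, pairVec, Fin.val_mk] at this
      rw [eq_comm, decide_eq_false_iff_not] at this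
      simp at this
    · apply dist_single _ _ ⟨c, hc⟩ (by simp [zVec])
      intro i' hi'
      have : i'.val ≠ c := fun h => hi' (Fin.ext h)
      simp [zVec, this]
    · apply dist_single _ _ ⟨2 * i, h2id⟩
      · show decide ((2 * i : ℕ) = c) ≠ pairVec d i ⟨2 * i, h2id⟩
        simp only [pairVec, Fin.val_mk]
        rw [decide_eq_false (by omega : ¬ (2 * i = c))]
        simp
      · intro i' hi'
        have h' : i'.val ≠ 2 * i := fun h => hi' (Fin.ext h)
        show decide (i'.val = c) = pairVec d i i'
        simp only [pairVec]
        exact decide_eq_decide.2 (by omega)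

lemma cube (d : ℕ) : ∀ c ≤ d, ∀ v : Fin d → Bool,
    (∀ j : Fin d, c ≤ j.val → v j = false) → Inf2 d (seedSet d) v := by
  intro c
  induction c with
  | zero =>
    intro _ v hv
    have : v = zVec d := funext fun j => hv j (Nat.zero_le _)
    rw [this]
    exact z_mem d
  | succ c ih =>
    intro hcd v hv
    exact layer (seedSet d) c (by omega) (ih (by omega)) (e_mem d c (by omega)) v
      (fun j hj => hv j hj)

lemma seed_perc (d : ℕ) : Percolates d 2 (seedSet d) := by
  have h : ∀ v : Fin d → Bool, Inf2 d (seedSet d) v := fun v =>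
    cube d d le_rfl v (fun j hj => absurd j.isLt (by omega))
  choose t ht using h
  refine ⟨Finset.univ.sup t, ?_⟩
  apply Finset.eq_univ_iff_forall.2
  intro v
  exact iterate_mono d 2 _ (Finset.le_sup (mem_univ v)) (ht v)

/-- For all `d ≥ 2`, `m(Q_d; 2) ≤ ⌈d/2⌉ + 1` (note `⌈d/2⌉ = (d+1)/2` in ℕ). -/
theorem stmt5 (d : ℕ) (hd : 2 ≤ d) : mQ d 2 ≤ (d + 1) / 2 + 1 := by
  have hmem : (seedSet d).card ∈
      {n : ℕ | ∃ A : Finset (Fin d → Bool), A.card = n ∧ Percolates d 2 A} :=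
    ⟨seedSet d, rfl, seed_perc d⟩
  calc mQ d 2 ≤ (seedSet d).card := Nat.sInf_le hmem
    _ ≤ ((Finset.range ((d + 1) / 2)).image (pairVec d)).card + 1 := card_insert_le _ _
    _ ≤ (d + 1) / 2 + 1 := by
        have := card_image_le (s := Finset.range ((d + 1) / 2)) (f := pairVec d)
        simp only [card_range] at this
        omega
end

section
/- Let r ≥ 2, k ≥ 1 and d ≥ r + k. Suppose S_1, …, S_r ⊆ V(Q_{d-k}) are such that (a) each S_i percolates under the i-neighbour bootstrap process on Q_{d-k}, and (c) S_1 ⊆ S_2 ⊆ ⋯ ⊆ S_{r-1}. Suppose ℓ_0 : V(Q_k) → {0,…,r} percolates under the r-meta bootstrap process on Q_k. Then the set A_0 = ⋃_{i=1}^r ⋃_{x ∈ ℓ_0^{-1}(i)} S_i^x percolates under the r-neighbour bootstrap process on Q_d, where S_i^x is the set of vertices of Q_d obtained by prefixing each vector of S_i with the k-bit string x. Consequently m(Q_d;r) ≤ Σ_{i=1}^r |ℓ_0^{-1}(i)|·|S_i|. -/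
open Finset

/-- One (synchronous) step of the r-meta bootstrap process on `Q_k`.
Rule 1 (Completion): a vertex of label `i` with at least `r - i` neighbours of label `r`
gets label `r`.  Rule 2 (Promotion): a vertex with at least `r` neighbours of strictly
larger label gets the r-th highest label among its neighbours, i.e. the largest `j ≤ r`
such that at least `r` neighbours have label `≥ j`. -/
def metaStep (k r : ℕ) (ℓ : (Fin k → Bool) → ℕ) : (Fin k → Bool) → ℕ := fun v =>
  if r ≤ ℓ v + ((Finset.univ.filter (fun w => hammingDist v w = 1)).filter
      (fun w => ℓ w = r)).card then r
  else if r ≤ ((Finset.univ.filter (fun w => hammingDist v w = 1)).filter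
      (fun w => ℓ v < ℓ w)).card then
    ((Finset.range (r + 1)).filter (fun j =>
      r ≤ ((Finset.univ.filter (fun w => hammingDist v w = 1)).filter
        (fun w => j ≤ ℓ w)).card)).sup id
  else ℓ v

/-- The labeling `ℓ` percolates under the r-meta bootstrap process on `Q_k`. -/
def MetaPercolates (k r : ℕ) (ℓ : (Fin k → Bool) → ℕ) : Prop :=
  ∃ t : ℕ, (metaStep k r)^[t] ℓ = fun _ => r

/-!
Split `Q_{k+m}` into the subcubes `{x} × Q_m`, `x ∈ Q_k`, and read a meta label `i` of `x` as
the statement that the subcube of `x` contains `seed i`: nothing for `0`, a copy of `S i` for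
`0 < i < r`, the whole subcube for `r`. A vertex of `{x} × Q_m` has its `m` neighbours inside the
subcube and one neighbour in each subcube `{w} × Q_m` with `w` adjacent to `x`. So if `r - i`
neighbouring subcubes are full, the `r`-neighbour process restricted to `{x} × Q_m` dominates the
`i`-neighbour process on `Q_m`, and a copy of `S i` fills the subcube (Completion); if `r`
neighbouring subcubes contain copies of `seed j`, so does `{x} × Q_m` one step later
(Promotion, using that the `S i` are nested). Hence each meta step is simulated by a bounded
number of bootstrap steps.
-/

open Finset

namespace SubcubeDecomposition

section Bootstrap

variable {d r : ℕ}

lemma subset_bootStep (A : Finset (Fin d → Bool)) : A ⊆ bootStep d r A :=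
  subset_union_left

lemma iterate_bootStep_mono {t u : ℕ} (h : t ≤ u) (A : Finset (Fin d → Bool)) :
    (bootStep d r)^[t] A ⊆ (bootStep d r)^[u] A :=
  Function.monotone_iterate_of_id_le (fun B => subset_bootStep B) h A

lemma iterate_bootStep_eq_univ_of_le {t u : ℕ} {A : Finset (Fin d → Bool)}
    (hA : (bootStep d r)^[t] A = univ) (h : t ≤ u) : (bootStep d r)^[u] A = univ :=
  univ_subset_iff.1 (hA ▸ iterate_bootStep_mono h A)

lemma mem_bootStep_of_le_card {A E : Finset (Fin d → Bool)} {v : Fin d → Bool}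
    (hEA : E ⊆ A) (hE : ∀ w ∈ E, hammingDist v w = 1) (hr : r ≤ #E) :
    v ∈ bootStep d r A :=
  mem_union_right _ <| mem_filter.2 ⟨mem_univ _, hr.trans <| card_le_card fun w hw =>
    mem_inter.2 ⟨mem_filter.2 ⟨mem_univ _, hE w hw⟩, hEA hw⟩⟩

lemma bootStep_zero (A : Finset (Fin d → Bool)) : bootStep d 0 A = univ :=
  univ_subset_iff.1 fun _ _ => mem_bootStep_of_le_card (empty_subset A) (by simp) le_rfl

lemma exists_iterate_bootStep_eq_univ (I : Finset ℕ) (S : ℕ → Finset (Fin d → Bool))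
    (h : ∀ i ∈ I, Percolates d i (S i)) :
    ∃ T, ∀ i ∈ I, (bootStep d i)^[T] (S i) = univ := by
  choose! t ht using h
  exact ⟨I.sup t, fun i hi => iterate_bootStep_eq_univ_of_le (ht i hi) (le_sup hi)⟩

lemma mQ_le_card {A : Finset (Fin d → Bool)} (h : Percolates d r A) : mQ d r ≤ #A :=
  Nat.sInf_le ⟨A, rfl, h⟩

end Bootstrap

section Subcubes

variable {k m r : ℕ}

lemma hammingDist_append {α : Type*} [DecidableEq α] (x y : Fin k → α) (s t : Fin m → α) :
    hammingDist (Fin.append x s) (Fin.append y t) = hammingDist x y + hammingDist s t := by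
  simp only [hammingDist, card_filter, Fin.sum_univ_add, Fin.append_left, Fin.append_right]

lemma append_inj_iff {α : Type*} {x y : Fin k → α} {s t : Fin m → α} :
    Fin.append x s = Fin.append y t ↔ x = y ∧ s = t :=
  ⟨fun h => Prod.ext_iff.1 ((Fin.appendEquiv k m).injective (a₁ := (x, s)) (a₂ := (y, t)) h),
    by rintro ⟨rfl, rfl⟩; rfl⟩

lemma append_mem_bootStep {B : Finset (Fin (k + m) → Bool)} {x : Fin k → Bool}
    {s : Fin m → Bool} {H : Finset (Fin k → Bool)} {W : Finset (Fin m → Bool)}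
    (hH : ∀ w ∈ H, hammingDist x w = 1 ∧ Fin.append w s ∈ B)
    (hW : ∀ u ∈ W, hammingDist s u = 1 ∧ Fin.append x u ∈ B) (hr : r ≤ #H + #W) :
    Fin.append x s ∈ bootStep (k + m) r B := by
  have hdisj : Disjoint (H.image (Fin.append · s)) (W.image (Fin.append x)) := by
    simp only [disjoint_left, mem_image, not_exists, not_and]
    rintro _ ⟨w, hw, rfl⟩ u _ h
    have hxw : x = w := (append_inj_iff.1 h).1
    simpa [hxw] using (hH w hw).1
  refine mem_bootStep_of_le_card (E := H.image (Fin.append · s) ∪ W.image (Fin.append x))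
    ?_ ?_ ?_
  · simp only [union_subset_iff, image_subset_iff]
    exact ⟨fun w hw => (hH w hw).2, fun u hu => (hW u hu).2⟩
  · simp only [mem_union, mem_image]
    rintro _ (⟨w, hw, rfl⟩ | ⟨u, hu, rfl⟩)
    · simp [hammingDist_append, (hH w hw).1]
    · simp [hammingDist_append, (hW u hu).1]
  · rwa [card_union_of_disjoint hdisj, card_image_of_injective _ fun _ _ h =>
      (append_inj_iff.1 h).1, card_image_of_injective _ fun _ _ h => (append_inj_iff.1 h).2]

lemma append_mem_iterate_bootStep {i : ℕ} {B : Finset (Fin (k + m) → Bool)} {x : Fin k → Bool}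
    {C : Finset (Fin m → Bool)} {H : Finset (Fin k → Bool)}
    (hH : ∀ w ∈ H, hammingDist x w = 1 ∧ ∀ s, Fin.append w s ∈ B) (hr : r ≤ i + #H)
    (hC : ∀ s ∈ C, Fin.append x s ∈ B) (t : ℕ) :
    ∀ s ∈ (bootStep m i)^[t] C, Fin.append x s ∈ (bootStep (k + m) r)^[t] B := by
  induction t with
  | zero => exact hC
  | succ t ih =>
    intro s hs
    rw [Function.iterate_succ_apply'] at hs ⊢
    rcases mem_union.1 hs with hs | hs
    · exact subset_bootStep _ (ih s hs)
    · refine append_mem_bootStep (H := H)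
        (W := univ.filter (fun u => hammingDist s u = 1) ∩ (bootStep m i)^[t] C)
        (fun w hw => ⟨(hH w hw).1, iterate_bootStep_mono (Nat.zero_le t) B ((hH w hw).2 s)⟩)
        (fun u hu => ?_) ?_
      · obtain ⟨hsu, hu⟩ := mem_inter.1 hu
        exact ⟨(mem_filter.1 hsu).2, ih u hu⟩
      · have : i ≤ #(univ.filter (fun u => hammingDist s u = 1) ∩ (bootStep m i)^[t] C) :=
          (mem_filter.1 hs).2
        omega

/-- The set `A_0` of the paper. -/
def blowup (r : ℕ) (S : ℕ → Finset (Fin m → Bool)) (ℓ : (Fin k → Bool) → ℕ) :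
    Finset (Fin (k + m) → Bool) :=
  (Icc 1 r).biUnion (fun i => (univ.filter (fun x : Fin k → Bool => ℓ x = i)).biUnion
    (fun x => (S i).image (fun s => Fin.append x s)))

lemma append_mem_blowup {S : ℕ → Finset (Fin m → Bool)} {ℓ : (Fin k → Bool) → ℕ}
    {x : Fin k → Bool} {s : Fin m → Bool} (h1 : 1 ≤ ℓ x) (hr : ℓ x ≤ r) (hs : s ∈ S (ℓ x)) :
    Fin.append x s ∈ blowup r S ℓ :=
  mem_biUnion.2 ⟨ℓ x, mem_Icc.2 ⟨h1, hr⟩,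
    mem_biUnion.2 ⟨x, mem_filter.2 ⟨mem_univ x, rfl⟩, mem_image_of_mem _ hs⟩⟩

lemma card_blowup_le (S : ℕ → Finset (Fin m → Bool)) (ℓ : (Fin k → Bool) → ℕ) :
    #(blowup r S ℓ) ≤ ∑ i ∈ Icc 1 r, #(univ.filter (fun x : Fin k → Bool => ℓ x = i)) * #(S i) :=
  card_biUnion_le.trans <| sum_le_sum fun i _ => card_biUnion_le.trans <|
    (sum_le_sum fun _ _ => card_image_le).trans_eq (by rw [sum_const, smul_eq_mul])

end Subcubes

section Seeds

variable {k m r : ℕ} (S : ℕ → Finset (Fin m → Bool))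

def seed (r i : ℕ) : Finset (Fin m → Bool) :=
  if i = 0 then ∅ else if i < r then S i else univ

lemma seed_eq_univ (hr : r ≠ 0) : seed S r r = univ := by
  simp [seed, hr]

lemma seed_mono (hS : ∀ i, 1 ≤ i → i + 1 ≤ r - 1 → S i ⊆ S (i + 1)) : Monotone (seed S r) := by
  intro i j hij
  rcases Nat.eq_zero_or_pos i with rfl | hi
  · simp [seed]
  by_cases hj : j < r
  · simp only [seed, if_neg hi.ne', if_neg (hi.trans_le hij).ne', if_pos (hij.trans_lt hj),
      if_pos hj]
    induction j, hij using Nat.le_induction with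
    | base => exact Subset.rfl
    | succ j hij ih => exact (ih (by omega)).trans (hS j (by omega) (by omega))
  · simp only [seed, if_neg (hi.trans_le hij).ne', if_neg hj]
    exact subset_univ _

def SeedCover (r : ℕ) (ℓ : (Fin k → Bool) → ℕ) (B : Finset (Fin (k + m) → Bool)) : Prop :=
  ∀ x, ∀ s ∈ seed S r (ℓ x), Fin.append x s ∈ B

variable {S}

lemma eq_univ_of_seedCover {B : Finset (Fin (k + m) → Bool)} (hr : r ≠ 0)
    (h : SeedCover S r (fun _ => r) B) : B = univ := by
  refine univ_subset_iff.1 fun v _ => ?_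
  rw [← Fin.append_castAdd_natAdd (f := v)]
  exact h _ _ (seed_eq_univ S hr ▸ mem_univ _)

lemma iterate_bootStep_seed_eq_univ {T i : ℕ}
    (hT : ∀ i, 1 ≤ i → i < r → (bootStep m i)^[T] (S i) = univ) (hi : i < r) :
    (bootStep m i)^[T + 1] (seed S r i) = univ := by
  rcases Nat.eq_zero_or_pos i with rfl | hpos
  · rw [Function.iterate_succ_apply', bootStep_zero]
  · rw [seed, if_neg hpos.ne', if_pos hi]
    exact iterate_bootStep_eq_univ_of_le (hT i hpos hi) (Nat.le_succ T)

variable {T : ℕ} {ℓ : (Fin k → Bool) → ℕ} {B : Finset (Fin (k + m) → Bool)}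

lemma seedCover_completion (hseed : Monotone (seed S r))
    (hT : ∀ i, 1 ≤ i → i < r → (bootStep m i)^[T] (S i) = univ) (hB : SeedCover S r ℓ B)
    {x : Fin k → Bool}
    (hx : r ≤ ℓ x + #((univ.filter fun w => hammingDist x w = 1).filter fun w => ℓ w = r)) :
    ∀ s ∈ seed S r r, Fin.append x s ∈ (bootStep (k + m) r)^[T + 1] B := by
  intro s hs
  by_cases hlt : ℓ x < r
  · have hfull : ∀ w, ℓ w = r → ∀ s, Fin.append w s ∈ B := fun w hw s =>
      hB w s (by rw [hw, seed_eq_univ S (by omega)]; exact mem_univ s)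
    refine append_mem_iterate_bootStep (C := seed S r (ℓ x)) (fun w hw => ?_) hx (hB x) (T + 1)
      s (iterate_bootStep_seed_eq_univ hT hlt ▸ mem_univ s)
    simp only [mem_filter, mem_univ, true_and] at hw
    exact ⟨hw.1, hfull w hw.2⟩
  · exact iterate_bootStep_mono (Nat.zero_le _) B (hB x s (hseed (not_lt.1 hlt) hs))

lemma seedCover_promotion (hseed : Monotone (seed S r)) (hB : SeedCover S r ℓ B)
    {x : Fin k → Bool} {j : ℕ}
    (hj : r ≤ #((univ.filter fun w => hammingDist x w = 1).filter fun w => j ≤ ℓ w)) :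
    ∀ s ∈ seed S r j, Fin.append x s ∈ bootStep (k + m) r B := by
  intro s hs
  refine append_mem_bootStep (W := ∅) (fun w hw => ?_) (by simp) (by simpa using hj)
  simp only [mem_filter, mem_univ, true_and] at hw
  exact ⟨hw.1, hB w s (hseed hw.2 hs)⟩

lemma SeedCover.map_metaStep (hseed : Monotone (seed S r))
    (hT : ∀ i, 1 ≤ i → i < r → (bootStep m i)^[T] (S i) = univ) (hB : SeedCover S r ℓ B) :
    SeedCover S r (metaStep k r ℓ) ((bootStep (k + m) r)^[T + 1] B) := by
  intro x
  unfold metaStep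
  split_ifs with hcompl
  · exact seedCover_completion hseed hT hB hcompl
  · set J := (range (r + 1)).filter fun j =>
      r ≤ #((univ.filter fun w => hammingDist x w = 1).filter fun w => j ≤ ℓ w)
    intro s hs
    rcases J.eq_empty_or_nonempty with hJ | hJ
    · simp [hJ, seed] at hs
    obtain ⟨j, hj, hjJ⟩ := exists_mem_eq_sup J hJ id
    rw [hjJ] at hs
    exact iterate_bootStep_mono (Nat.succ_pos T) B
      (by simpa using seedCover_promotion hseed hB (mem_filter.1 hj).2 s hs)
  · exact fun s hs => iterate_bootStep_mono (Nat.zero_le _) B (hB x s hs)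

lemma seedCover_blowup (hℓ : ∀ x, ℓ x ≤ r)
    (hT : ∀ i, 1 ≤ i → i ≤ r → (bootStep m i)^[T] (S i) = univ) :
    SeedCover S r ℓ ((bootStep (k + m) r)^[T] (blowup r S ℓ)) := by
  intro x s hs
  unfold seed at hs
  split_ifs at hs with h0 hlt
  · exact absurd hs (notMem_empty s)
  · exact iterate_bootStep_mono (Nat.zero_le T) _
      (append_mem_blowup (by omega) (hℓ x) hs)
  · have hx : ℓ x = r := le_antisymm (hℓ x) (not_lt.1 hlt)
    refine append_mem_iterate_bootStep (H := ∅) (i := r) (C := S r) (by simp) (by simp)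
      (fun s hs => append_mem_blowup (by omega) (hℓ x) (hx ▸ hs)) T s ?_
    rw [hT r (by omega) le_rfl]
    exact mem_univ s

lemma SeedCover.map_iterate_metaStep (hseed : Monotone (seed S r))
    (hT : ∀ i, 1 ≤ i → i < r → (bootStep m i)^[T] (S i) = univ) (hB : SeedCover S r ℓ B)
    (n : ℕ) :
    SeedCover S r ((metaStep k r)^[n] ℓ) ((bootStep (k + m) r)^[(T + 1) * n] B) := by
  induction n with
  | zero => exact hB
  | succ n ih =>
    rw [Function.iterate_succ_apply', Nat.mul_succ, add_comm ((T + 1) * n),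
      Function.iterate_add_apply]
    exact ih.map_metaStep hseed hT

end Seeds

theorem percolates_blowup {k m r : ℕ} (hr : r ≠ 0) {S : ℕ → Finset (Fin m → Bool)}
    (hperc : ∀ i, 1 ≤ i → i ≤ r → Percolates m i (S i))
    (hnested : ∀ i, 1 ≤ i → i + 1 ≤ r - 1 → S i ⊆ S (i + 1))
    {ℓ : (Fin k → Bool) → ℕ} (hℓ : ∀ x, ℓ x ≤ r) (hmeta : MetaPercolates k r ℓ) :
    Percolates (k + m) r (blowup r S ℓ) := by
  obtain ⟨T, hT⟩ := exists_iterate_bootStep_eq_univ (Icc 1 r) S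
    fun i hi => hperc i (mem_Icc.1 hi).1 (mem_Icc.1 hi).2
  replace hT : ∀ i, 1 ≤ i → i ≤ r → (bootStep m i)^[T] (S i) = univ :=
    fun i h1 h2 => hT i (mem_Icc.2 ⟨h1, h2⟩)
  obtain ⟨n, hn⟩ := hmeta
  have hcover := SeedCover.map_iterate_metaStep (seed_mono S hnested)
    (fun i h1 h2 => hT i h1 h2.le) (seedCover_blowup hℓ hT) n
  rw [hn, ← Function.iterate_add_apply] at hcover
  exact ⟨_, eq_univ_of_seedCover hr hcover⟩

end SubcubeDecomposition

theorem stmt6_general (r k m : ℕ) (hr : 2 ≤ r)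
    (S : ℕ → Finset (Fin m → Bool))
    (hperc : ∀ i, 1 ≤ i → i ≤ r → Percolates m i (S i))
    (hnested : ∀ i, 1 ≤ i → i + 1 ≤ r - 1 → S i ⊆ S (i + 1))
    (ℓ0 : (Fin k → Bool) → ℕ) (hℓ : ∀ x, ℓ0 x ≤ r)
    (hmeta : MetaPercolates k r ℓ0) :
    Percolates (k + m) r
      ((Finset.Icc 1 r).biUnion (fun i =>
        (Finset.univ.filter (fun x : Fin k → Bool => ℓ0 x = i)).biUnion
          (fun x => (S i).image (fun s => Fin.append x s)))) ∧
    mQ (k + m) r ≤ ∑ i ∈ Finset.Icc 1 r,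
      (Finset.univ.filter (fun x : Fin k → Bool => ℓ0 x = i)).card * (S i).card := by
  have hA0 := SubcubeDecomposition.percolates_blowup (by omega) hperc hnested hℓ hmeta
  exact ⟨hA0, (SubcubeDecomposition.mQ_le_card hA0).trans
    (SubcubeDecomposition.card_blowup_le S ℓ0)⟩

/-- The subcube decomposition lemma (Lemma 2.2).  Here `d = k + m` with `m ≥ r`
(equivalently `d ≥ r + k`).  `Fin.append x s` prefixes the vector `s ∈ Q_m`
with `x ∈ Q_k`. -/
theorem stmt6 (r k m : ℕ) (hr : 2 ≤ r) (hk : 1 ≤ k) (hm : r ≤ m)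
    (S : ℕ → Finset (Fin m → Bool))
    (hperc : ∀ i, 1 ≤ i → i ≤ r → Percolates m i (S i))
    (hnested : ∀ i, 1 ≤ i → i + 1 ≤ r - 1 → S i ⊆ S (i + 1))
    (ℓ0 : (Fin k → Bool) → ℕ) (hℓ : ∀ x, ℓ0 x ≤ r)
    (hmeta : MetaPercolates k r ℓ0) :
    Percolates (k + m) r
      ((Finset.Icc 1 r).biUnion (fun i =>
        (Finset.univ.filter (fun x : Fin k → Bool => ℓ0 x = i)).biUnion
          (fun x => (S i).image (fun s => Fin.append x s)))) ∧
    mQ (k + m) r ≤ ∑ i ∈ Finset.Icc 1 r,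
      (Finset.univ.filter (fun x : Fin k → Bool => ℓ0 x = i)).card * (S i).card :=
  stmt6_general r k m hr S hperc hnested ℓ0 hℓ hmeta
end

section
/- The labeling ℓ_0^4 of Q_4 defined by ℓ_0^4(0,0,1,1)=1; ℓ_0^4(0,0,0,0)=ℓ_0^4(0,1,0,1)=ℓ_0^4(1,0,0,1)=2; ℓ_0^4(1,0,1,0)=ℓ_0^4(1,1,0,0)=ℓ_0^4(1,1,1,1)=3; ℓ_0^4(0,1,1,0)=4; and 0 on all other vertices, percolates under the 4-meta bootstrap process on Q_4. -/
open Finset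

/-- The labeling `ℓ_0^4` of `Q_4` from the paper. -/
def ell4 : (Fin 4 → Bool) → ℕ := fun v =>
  if v = ![false, false, true, true] then 1
  else if v = ![false, false, false, false] ∨ v = ![false, true, false, true] ∨
          v = ![true, false, false, true] then 2
  else if v = ![true, false, true, false] ∨ v = ![true, true, false, false] ∨
          v = ![true, true, true, true] then 3
  else if v = ![false, true, true, false] then 4
  else 0


def L (l : List ℕ) : (Fin 4 → Bool) → ℕ := fun v =>
  l.getD ((cond (v 0) 1 0) + 2 * (cond (v 1) 1 0) + 4 * (cond (v 2) 1 0) +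
    8 * (cond (v 3) 1 0)) 0

def lab1 : (Fin 4 → Bool) → ℕ := L [2, 2, 2, 3, 1, 3, 4, 3, 1, 2, 2, 2, 1, 1, 1, 3]
def lab2 : (Fin 4 → Bool) → ℕ := L [2, 2, 2, 3, 1, 3, 4, 4, 1, 2, 2, 2, 1, 1, 1, 3]
def lab3 : (Fin 4 → Bool) → ℕ := L [2, 2, 2, 4, 1, 4, 4, 4, 1, 2, 2, 2, 1, 1, 1, 4]
def lab4 : (Fin 4 → Bool) → ℕ := L [2, 4, 4, 4, 1, 4, 4, 4, 1, 2, 2, 4, 1, 1, 1, 4]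
def lab5 : (Fin 4 → Bool) → ℕ := L [4, 4, 4, 4, 1, 4, 4, 4, 1, 4, 4, 4, 1, 1, 1, 4]
def lab6 : (Fin 4 → Bool) → ℕ := L [4, 4, 4, 4, 4, 4, 4, 4, 4, 4, 4, 4, 1, 4, 4, 4]

lemma s1 : metaStep 4 4 ell4 = lab1 := funext (fun v => by revert v; decide)
lemma s2 : metaStep 4 4 lab1 = lab2 := funext (fun v => by revert v; decide)
lemma s3 : metaStep 4 4 lab2 = lab3 := funext (fun v => by revert v; decide)
lemma s4 : metaStep 4 4 lab3 = lab4 := funext (fun v => by revert v; decide)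
lemma s5 : metaStep 4 4 lab4 = lab5 := funext (fun v => by revert v; decide)
lemma s6 : metaStep 4 4 lab5 = lab6 := funext (fun v => by revert v; decide)
lemma s7 : metaStep 4 4 lab6 = fun _ => 4 := funext (fun v => by revert v; decide)

/-- This labeling percolates under the 4-meta bootstrap process on `Q_4`. -/
theorem stmt8 : MetaPercolates 4 4 ell4 :=
  ⟨7, by
  simp only [Function.iterate_succ_apply, Function.iterate_zero_apply,
    s1, s2, s3, s4, s5, s6, s7]⟩
end

section
/- The set S_3^4 = {0000, 1100, 0011, 0110, 1001, 1111} ⊆ V(Q_4) contains the 2-neighbour percolating set {0000, 1100, 0011}, has cardinality 6 = ⌈4·(4+3)/6⌉ + 1, and percolates under the 3-neighbour bootstrap process on Q_4. -/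
open Finset

/-- `S_3^4` contains the 2-neighbour percolating set `{0000, 1100, 0011}`, has
cardinality `6 = ⌈4·(4+3)/6⌉ + 1`, and percolates under the 3-neighbour bootstrap
process on `Q_4`. -/
theorem stmt9 :
    ({
    ![false, false, false, false], ![true, true, false, false], ![false, false, true, true]} : Finset (Fin 4 → Bool)) ⊆
      ({
    ![false, false, false, false], ![true, true, false, false], ![false, false, true, true],
    ![false, true, true, false], ![true, false, false, true], ![true, true, true, true]} : Finset (Fin 4 → Bool)) ∧
    ({
    ![false, false, false, false], ![true, true, false, false], ![false, false, true, true],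
    ![false, true, true, false], ![true, false, false, true], ![true, true, true, true]} : Finset (Fin 4 → Bool)).card = 6 ∧
    6 = (4 * (4 + 3) + 5) / 6 + 1 ∧
    Percolates 4 3 ({
    ![false, false, false, false], ![true, true, false, false], ![false, false, true, true],
    ![false, true, true, false], ![true, false, false, true], ![true, true, true, true]} : Finset (Fin 4 → Bool)) := by
  refine ⟨by decide, by decide, by norm_num, 4, by decide⟩
end

section
/- For all d ≥ 3, m(Q_d;3) ≤ ⌈d(d+3)/6⌉ + 1. -/
open Finset

/-!
Write `Q_{d+3} = Q_d × Q_3` and call `{x} × Q_3` the column over `x`. If `A` percolates in `Q_d`,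
then `A × {000}` infects the slice `Q_d × {000}`, after which a column is infected as soon as two
neighbouring columns are. By induction on the weight of `x` it is therefore enough to infect the
columns over `0` and over the unit vectors `e_j`, and `d + 3` further vertices achieve this: two
above `e_{2k} + e_{2k+1}` for each pair of coordinates, together with three vertices in the column
over `0` when `d` is even, or six around the last three coordinates when `d` is odd. Each of these
local steps takes place in an isometrically embedded copy of `Q_m × Q_3` with `m ≤ 3`, where
it is checked by computation. Hence `m(Q_{d+3}; 3) ≤ m(Q_d; 3) + d + 3` for `d ≠ 1`; as
`(d + 3)(d + 6) = d(d + 3) + 6(d + 3)`, the bound follows by induction from `d = 3, 4, 5`.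
-/

open Function

namespace Bootstrap

def Infected (d r : ℕ) (A : Finset (Fin d → Bool)) (v : Fin d → Bool) : Prop :=
  ∃ t, v ∈ (bootStep d r)^[t] A

variable {d r : ℕ}

lemma monotone_iterate_bootStep (A : Finset (Fin d → Bool)) :
    Monotone fun t => (bootStep d r)^[t] A :=
  monotone_nat_of_le_succ fun t => by
    rw [iterate_succ_apply']
    exact subset_union_left

lemma infected_of_mem {A : Finset (Fin d → Bool)} {v : Fin d → Bool} (h : v ∈ A) :
    Infected d r A v :=
  ⟨0, h⟩

lemma exists_subset_iterate_bootStep {A S : Finset (Fin d → Bool)}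
    (hS : ∀ w ∈ S, Infected d r A w) : ∃ t, S ⊆ (bootStep d r)^[t] A := by
  choose! τ hτ using hS
  exact ⟨S.sup τ, fun w hw => monotone_iterate_bootStep A (le_sup hw) (hτ w hw)⟩

lemma infected_of_le_card {A S : Finset (Fin d → Bool)} {v : Fin d → Bool}
    (hadj : ∀ w ∈ S, hammingDist v w = 1) (hS : ∀ w ∈ S, Infected d r A w) (hr : r ≤ #S) :
    Infected d r A v := by
  obtain ⟨t, ht⟩ := exists_subset_iterate_bootStep hS
  refine ⟨t + 1, ?_⟩
  rw [iterate_succ_apply']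
  refine mem_union_right _ (mem_filter.2 ⟨mem_univ _, hr.trans (card_le_card ?_)⟩)
  exact fun w hw => mem_inter.2 ⟨mem_filter.2 ⟨mem_univ _, hadj w hw⟩, ht hw⟩

lemma percolates_iff_forall_infected {A : Finset (Fin d → Bool)} :
    Percolates d r A ↔ ∀ v, Infected d r A v := by
  refine ⟨fun ⟨t, ht⟩ v => ⟨t, ht ▸ mem_univ v⟩, fun h => ?_⟩
  obtain ⟨t, ht⟩ := exists_subset_iterate_bootStep (S := univ) fun w _ => h w
  exact ⟨t, univ_subset_iff.1 ht⟩

lemma Infected.of_isometry {m n : ℕ} {A : Finset (Fin m → Bool)} {B : Finset (Fin n → Bool)}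
    {f : (Fin m → Bool) → Fin n → Bool}
    (hf : ∀ u v, hammingDist (f u) (f v) = hammingDist u v)
    (hA : ∀ v ∈ A, Infected n r B (f v)) {v : Fin m → Bool} (hv : Infected m r A v) :
    Infected n r B (f v) := by
  have hinj : Injective f := fun u v h => by
    rw [← hammingDist_eq_zero, ← hf, h, hammingDist_self]
  obtain ⟨t, ht⟩ := hv
  induction t generalizing v with
  | zero => exact hA v ht
  | succ t ih =>
    rw [iterate_succ_apply'] at ht
    rcases mem_union.1 ht with ht | ht
    · exact ih ht
    set N := univ.filter (fun w => hammingDist v w = 1) ∩ (bootStep m r)^[t] A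
    refine infected_of_le_card (S := N.image f) ?_ ?_ ?_
    · simp only [mem_image, forall_exists_index, and_imp, forall_apply_eq_imp_iff₂, hf]
      exact fun w hw => (mem_filter.1 (mem_inter.1 hw).1).2
    · simp only [mem_image, forall_exists_index, and_imp, forall_apply_eq_imp_iff₂]
      exact fun w hw => ih (mem_inter.1 hw).2
    · rw [card_image_of_injective _ hinj]
      exact (mem_filter.1 ht).2

lemma hammingDist_append {m n : ℕ} {α : Type*} [DecidableEq α] (x y : Fin m → α)
    (s t : Fin n → α) :
    hammingDist (Fin.append x s) (Fin.append y t) = hammingDist x y + hammingDist s t := by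
  simp only [hammingDist, card_filter, Fin.sum_univ_add, Fin.append_left, Fin.append_right]

lemma hammingDist_add_left {ι β : Type*} [Fintype ι] [DecidableEq β] [Add β]
    [IsLeftCancelAdd β] (x a b : ι → β) : hammingDist (x + a) (x + b) = hammingDist a b :=
  hammingDist_comp (fun i => (x i + ·)) fun i => add_right_injective (x i)

lemma hammingDist_extend {α β γ : Type*} [Fintype α] [Fintype β] [DecidableEq γ]
    {ι : α → β} (hι : Injective ι) (u v : α → γ) (e : β → γ) :
    hammingDist (extend ι u e) (extend ι v e) = hammingDist u v := by
  classical
  unfold hammingDist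
  rw [← card_image_of_injective _ hι]
  congr 1
  ext b
  simp only [mem_filter, mem_univ, true_and, mem_image]
  by_cases hb : ∃ a, ι a = b
  · obtain ⟨a, rfl⟩ := hb
    simp [hι.extend_apply, hι.eq_iff]
  · simp only [extend_apply' _ _ _ hb, ne_eq, not_true_eq_false, false_iff]
    exact fun ⟨a, _, ha⟩ => hb ⟨a, ha⟩

lemma extend_single {α β γ : Type*} [DecidableEq α] [DecidableEq β] [Zero γ] {ι : α → β}
    (hι : Injective ι) (a : α) (g : γ) : extend ι (Pi.single a g) 0 = Pi.single (ι a) g := by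
  funext b
  by_cases hb : ∃ a', ι a' = b
  · obtain ⟨a', rfl⟩ := hb
    simp [hι.extend_apply, Pi.single_apply, hι.eq_iff]
  · rw [extend_apply' _ _ _ hb, Pi.zero_apply, Pi.single_eq_of_ne]
    exact fun h => hb ⟨a, h.symm⟩

lemma hammingNorm_add_single_lt {ι : Type*} [Fintype ι] [DecidableEq ι] {x : ι → Bool}
    {i : ι} (h : x i = true) : hammingNorm (x + Pi.single i true) < hammingNorm x := by
  have : univ.filter (fun k => (x + Pi.single i true : ι → Bool) k ≠ 0) =
      (univ.filter fun k => x k ≠ 0).erase i := by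
    ext k
    by_cases hk : k = i
    · subst hk; simp [h, Bool.zero_eq_false]
    · simp [hk]
  rw [hammingNorm, hammingNorm, this]
  exact card_erase_lt_of_mem (by simp [h, Bool.zero_eq_false])

lemma exists_eq_single_of_hammingNorm_eq_one {ι : Type*} [Fintype ι] [DecidableEq ι]
    {x : ι → Bool} (h : hammingNorm x = 1) : ∃ j, x = Pi.single j true := by
  obtain ⟨j, hj⟩ := card_eq_one.1 h
  refine ⟨j, funext fun k => ?_⟩
  have := Finset.ext_iff.1 hj k
  by_cases hk : k = j
  · subst hk; simpa [Bool.zero_eq_false] using this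
  · simpa [hk, Bool.zero_eq_false] using this

noncomputable def subcube {m : ℕ} (x : Fin d → Bool) (ι : Fin m → Fin d)
    (u : Fin m → Bool) : Fin d → Bool :=
  x + extend ι u 0

section Subcube

variable {m : ℕ} {x : Fin d → Bool} {ι : Fin m → Fin d}

lemma hammingDist_subcube (hι : Injective ι) (u v : Fin m → Bool) :
    hammingDist (subcube x ι u) (subcube x ι v) = hammingDist u v := by
  rw [subcube, subcube, hammingDist_add_left, hammingDist_extend hι]

lemma subcube_zero : subcube x ι 0 = x := by
  rw [subcube, extend_zero, add_zero]

lemma subcube_single (hι : Injective ι) (a : Fin m) :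
    subcube x ι (Pi.single a true) = x + Pi.single (ι a) true := by
  rw [subcube, extend_single hι]

end Subcube

def ColumnFull {c : ℕ} (r : ℕ) (B : Finset (Fin (d + c) → Bool)) (x : Fin d → Bool) :
    Prop :=
  ∀ s : Fin c → Bool, Infected (d + c) r B (Fin.append x s)

lemma percolates_of_forall_columnFull {c : ℕ} {B : Finset (Fin (d + c) → Bool)}
    (h : ∀ x, ColumnFull r B x) : Percolates (d + c) r B :=
  percolates_iff_forall_infected.2 fun v => by
    rw [← Fin.append_castAdd_natAdd (f := v)]
    exact h _ _

lemma infected_append_zero {c : ℕ} {A : Finset (Fin d → Bool)}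
    {B : Finset (Fin (d + c) → Bool)} (hA : Percolates d r A)
    (hB : A.image (Fin.append · 0) ⊆ B) (y : Fin d → Bool) :
    Infected (d + c) r B (Fin.append y 0) :=
  Infected.of_isometry (fun u v => by rw [hammingDist_append, hammingDist_self, add_zero])
    (fun v hv => infected_of_mem (hB (mem_image_of_mem _ hv)))
    (percolates_iff_forall_infected.1 hA y)

/-- Vertices of `Q_{m+c}` are read as pairs `(u, s) ∈ Q_m × Q_c`; the seeds are the slice
`s = 0` together with the pairs satisfying `P`. -/
def windowSeeds {m c : ℕ} (P : (Fin m → Bool) → (Fin c → Bool) → Prop)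
    [∀ u s, Decidable (P u s)] : Finset (Fin (m + c) → Bool) :=
  univ.filter fun v =>
    (fun i => v (Fin.natAdd m i)) = 0 ∨
      P (fun i => v (Fin.castAdd c i)) fun i => v (Fin.natAdd m i)

lemma columnFull_subcube_of_percolates {m c : ℕ} {B : Finset (Fin (d + c) → Bool)}
    {x : Fin d → Bool} {ι : Fin m → Fin d} (hι : Injective ι)
    (P : (Fin m → Bool) → (Fin c → Bool) → Prop) [∀ u s, Decidable (P u s)]
    (hP : Percolates (m + c) r (windowSeeds P))
    (hslice : ∀ y, Infected (d + c) r B (Fin.append y 0))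
    (hseed : ∀ u s, P u s → Infected (d + c) r B (Fin.append (subcube x ι u) s))
    (u : Fin m → Bool) : ColumnFull r B (subcube x ι u) := by
  let f : (Fin (m + c) → Bool) → Fin (d + c) → Bool := fun v =>
    Fin.append (subcube x ι fun i => v (Fin.castAdd c i)) fun i => v (Fin.natAdd m i)
  have hf_append : ∀ u s, f (Fin.append u s) = Fin.append (subcube x ι u) s := by
    simp [f]
  have hf : ∀ v w, hammingDist (f v) (f w) = hammingDist v w := fun v w => by
    conv_rhs => rw [← Fin.append_castAdd_natAdd (f := v), ← Fin.append_castAdd_natAdd (f := w)]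
    rw [hammingDist_append, hammingDist_append, hammingDist_subcube hι]
  intro t
  rw [← hf_append]
  refine Infected.of_isometry hf (fun v hv => ?_) (percolates_iff_forall_infected.1 hP _)
  obtain ⟨u, s, rfl⟩ : ∃ u s, v = Fin.append u s := ⟨_, _, Fin.append_castAdd_natAdd.symm⟩
  simp only [windowSeeds, mem_filter, mem_univ, true_and, Fin.append_left, Fin.append_right]
    at hv
  rw [hf_append]
  rcases hv with hs | hv
  · rw [show s = 0 from hs]
    exact hslice _
  · exact hseed u s hv

noncomputable def place {m : ℕ} (ι : Fin m → Fin d)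
    (G : Finset ((Fin m → Bool) × (Fin 3 → Bool))) : Finset (Fin (d + 3) → Bool) :=
  G.image fun p => Fin.append (subcube 0 ι p.1) p.2

lemma card_place_le {m : ℕ} (ι : Fin m → Fin d)
    (G : Finset ((Fin m → Bool) × (Fin 3 → Bool))) : #(place ι G) ≤ #G :=
  card_image_le

def pairGadget : Finset ((Fin 2 → Bool) × (Fin 3 → Bool)) :=
  {(![true, true], ![false, true, true]), (![true, true], ![true, false, true])}

def centreGadget : Finset ((Fin 0 → Bool) × (Fin 3 → Bool)) :=
  {(![], ![true, true, false]), (![], ![true, false, true]), (![], ![false, true, true])}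

def tripleGadget : Finset ((Fin 3 → Bool) × (Fin 3 → Bool)) :=
  {(![false, false, false], ![false, true, true]), (![true, true, false], ![false, true, true]),
    (![true, true, false], ![true, false, true]), (![false, false, true], ![true, false, true]),
    (![false, false, true], ![true, true, false]), (![true, false, false], ![true, true, true])}

section Columns

variable {B : Finset (Fin (d + 3) → Bool)}

lemma infected_of_mem_place {m : ℕ} {ι : Fin m → Fin d}
    {G : Finset ((Fin m → Bool) × (Fin 3 → Bool))} (hB : place ι G ⊆ B) {u : Fin m → Bool}
    {s : Fin 3 → Bool} (h : (u, s) ∈ G) :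
    Infected (d + 3) 3 B (Fin.append (subcube 0 ι u) s) :=
  infected_of_mem (hB (mem_image_of_mem _ h))

set_option maxRecDepth 10000 in
lemma columnFull_of_columnFull_add_single
    (hslice : ∀ y, Infected (d + 3) 3 B (Fin.append y 0)) {x : Fin d → Bool} {i j : Fin d}
    (hij : i ≠ j)
    (hi : ColumnFull 3 B (x + Pi.single i true)) (hj : ColumnFull 3 B (x + Pi.single j true)) :
    ColumnFull 3 B x := by
  have hι : Injective ![i, j] := injective_pair_iff_ne.2 hij
  have h := columnFull_subcube_of_percolates hι (x := x)
    (fun u _ => ∃ a, u = Pi.single a true) ⟨3, by decide⟩ hslice ?_ 0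
  · rwa [subcube_zero] at h
  rintro u s ⟨a, rfl⟩
  rw [subcube_single hι]
  fin_cases a
  exacts [hi s, hj s]

set_option maxRecDepth 10000 in
lemma columnFull_single_of_place_pairGadget
    (hslice : ∀ y, Infected (d + 3) 3 B (Fin.append y 0)) {ι : Fin 2 → Fin d}
    (hι : Injective ι)
    (h0 : ColumnFull 3 B 0) (hB : place ι pairGadget ⊆ B) (a : Fin 2) :
    ColumnFull 3 B (Pi.single (ι a) true) := by
  have h := columnFull_subcube_of_percolates hι (x := 0)
    (fun u s => u = 0 ∨ (u, s) ∈ pairGadget) ⟨6, by decide⟩ hslice ?_ (Pi.single a true)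
  · rwa [subcube_single hι, zero_add] at h
  rintro u s (rfl | h)
  · rw [subcube_zero]
    exact h0 s
  · exact infected_of_mem_place hB h

set_option maxRecDepth 10000 in
lemma columnFull_zero_of_place_centreGadget
    (hslice : ∀ y, Infected (d + 3) 3 B (Fin.append y 0)) (hB : place ![] centreGadget ⊆ B) :
    ColumnFull 3 B 0 := by
  have h := columnFull_subcube_of_percolates (injective_of_subsingleton ![]) (x := 0)
    (fun u s => (u, s) ∈ centreGadget) ⟨1, by decide⟩ hslice
    (fun _ _ h => infected_of_mem_place hB h) 0
  rwa [subcube_zero] at h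

set_option maxRecDepth 10000 in
lemma columnFull_of_place_tripleGadget
    (hslice : ∀ y, Infected (d + 3) 3 B (Fin.append y 0)) {ι : Fin 3 → Fin d}
    (hι : Injective ι)
    (hB : place ι tripleGadget ⊆ B) :
    ColumnFull 3 B 0 ∧ ∀ a, ColumnFull 3 B (Pi.single (ι a) true) := by
  have h := columnFull_subcube_of_percolates hι (fun u s => (u, s) ∈ tripleGadget)
    ⟨10, by decide⟩ hslice (fun _ _ h => infected_of_mem_place hB h)
  refine ⟨by simpa only [subcube_zero] using h 0, fun a => ?_⟩
  simpa only [subcube_single hι, zero_add] using h (Pi.single a true)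

end Columns

lemma columnFull_of_columnFull_zero_single {B : Finset (Fin (d + 3) → Bool)}
    (hslice : ∀ y, Infected (d + 3) 3 B (Fin.append y 0)) (h0 : ColumnFull 3 B 0)
    (h1 : ∀ j, ColumnFull 3 B (Pi.single j true)) (x : Fin d → Bool) : ColumnFull 3 B x := by
  induction hn : hammingNorm x using Nat.strong_induction_on generalizing x with
  | _ n ih =>
  subst hn
  rcases lt_or_ge 1 (hammingNorm x) with hx | hx
  · obtain ⟨i, hi, j, hj, hij⟩ := one_lt_card.1 hx
    simp only [mem_filter, mem_univ, true_and, ne_eq, Bool.zero_eq_false, Bool.not_eq_false]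
      at hi hj
    exact columnFull_of_columnFull_add_single hslice hij
      (ih _ (hammingNorm_add_single_lt hi) _ rfl) (ih _ (hammingNorm_add_single_lt hj) _ rfl)
  rcases Nat.le_one_iff_eq_zero_or_eq_one.1 hx with hx | hx
  · rwa [hammingNorm_eq_zero.1 hx]
  · obtain ⟨j, rfl⟩ := exists_eq_single_of_hammingNorm_eq_one hx
    exact h1 j

def pairCoords {K : ℕ} (h : 2 * K ≤ d) (k : Fin K) : Fin 2 → Fin d :=
  fun b => ⟨2 * k + b, by omega⟩

lemma pairCoords_injective {K : ℕ} (h : 2 * K ≤ d) (k : Fin K) : Injective (pairCoords h k) :=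
  fun a b hab => Fin.ext (by simpa [pairCoords] using congrArg Fin.val hab)

noncomputable def pairSeeds {K : ℕ} (h : 2 * K ≤ d) : Finset (Fin (d + 3) → Bool) :=
  univ.biUnion fun k => place (pairCoords h k) pairGadget

lemma place_subset_pairSeeds {K : ℕ} (h : 2 * K ≤ d) (k : Fin K) :
    place (pairCoords h k) pairGadget ⊆ pairSeeds h :=
  subset_biUnion_of_mem (fun k => place (pairCoords h k) pairGadget) (mem_univ k)

lemma card_pairSeeds_le {K : ℕ} (h : 2 * K ≤ d) : #(pairSeeds h) ≤ 2 * K := by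
  have := card_biUnion_le_card_mul univ (fun k => place (pairCoords h k) pairGadget) 2
    fun k _ => (card_place_le _ _).trans (by decide)
  rwa [card_univ, Fintype.card_fin, mul_comm] at this

lemma columnFull_single_of_pairSeeds {B : Finset (Fin (d + 3) → Bool)}
    (hslice : ∀ y, Infected (d + 3) 3 B (Fin.append y 0)) (h0 : ColumnFull 3 B 0)
    {K : ℕ} (h : 2 * K ≤ d) (hB : pairSeeds h ⊆ B) (j : Fin d) (hj : (j : ℕ) < 2 * K) :
    ColumnFull 3 B (Pi.single j true) := by
  let k : Fin K := ⟨j / 2, by omega⟩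
  have := columnFull_single_of_place_pairGadget hslice (pairCoords_injective h k) h0
    ((place_subset_pairSeeds h k).trans hB) ⟨j % 2, by omega⟩
  convert this
  ext
  simp only [pairCoords, k]
  omega

lemma card_union_union_le_add {α : Type*} [DecidableEq α] {s t u : Finset α} {a b c : ℕ}
    (hs : #s ≤ a) (ht : #t ≤ b) (hu : #u ≤ c) : #(s ∪ t ∪ u) ≤ a + b + c :=
  (card_union_le _ _).trans (add_le_add ((card_union_le _ _).trans (add_le_add hs ht)) hu)

lemma exists_percolating_even {K : ℕ} {A : Finset (Fin (2 * K) → Bool)}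
    (hA : Percolates (2 * K) 3 A) :
    ∃ B : Finset (Fin (2 * K + 3) → Bool),
      #B ≤ #A + (2 * K + 3) ∧ Percolates (2 * K + 3) 3 B := by
  set B := A.image (Fin.append · 0) ∪ place ![] centreGadget ∪ pairSeeds le_rfl
  refine ⟨B, ?_, ?_⟩
  · calc #B ≤ #A + #centreGadget + 2 * K := card_union_union_le_add card_image_le
          (card_place_le _ _) (card_pairSeeds_le _)
      _ = #A + (2 * K + 3) := by rw [show #centreGadget = 3 by decide]; ring
  have hslice : ∀ y, Infected _ 3 B (Fin.append y 0) :=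
    infected_append_zero hA (subset_union_left.trans subset_union_left)
  have h0 := columnFull_zero_of_place_centreGadget hslice
    (subset_union_right.trans subset_union_left)
  exact percolates_of_forall_columnFull <| columnFull_of_columnFull_zero_single hslice h0
    fun j => columnFull_single_of_pairSeeds hslice h0 le_rfl subset_union_right j j.isLt

lemma exists_percolating_odd {K : ℕ} {A : Finset (Fin (2 * K + 3) → Bool)}
    (hA : Percolates (2 * K + 3) 3 A) :
    ∃ B : Finset (Fin (2 * K + 3 + 3) → Bool),
      #B ≤ #A + (2 * K + 3 + 3) ∧ Percolates (2 * K + 3 + 3) 3 B := by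
  have hK : 2 * K ≤ 2 * K + 3 := by omega
  set B := A.image (Fin.append · 0) ∪ place (Fin.natAdd (2 * K)) tripleGadget ∪ pairSeeds hK
  refine ⟨B, ?_, ?_⟩
  · calc #B ≤ #A + #tripleGadget + 2 * K := card_union_union_le_add card_image_le
          (card_place_le _ _) (card_pairSeeds_le _)
      _ = #A + (2 * K + 3 + 3) := by rw [show #tripleGadget = 6 by decide]; ring
  have hslice : ∀ y, Infected _ 3 B (Fin.append y 0) :=
    infected_append_zero hA (subset_union_left.trans subset_union_left)
  obtain ⟨h0, htriple⟩ := columnFull_of_place_tripleGadget hslice (Fin.natAdd_injective _ _)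
    (subset_union_right.trans subset_union_left)
  refine percolates_of_forall_columnFull <| columnFull_of_columnFull_zero_single hslice h0
    fun j => ?_
  by_cases hj : (j : ℕ) < 2 * K
  · exact columnFull_single_of_pairSeeds hslice h0 hK subset_union_right j hj
  · convert htriple ⟨j - 2 * K, by omega⟩
    ext
    simp only [Fin.natAdd]
    omega

lemma exists_percolating_add_three (hd : d ≠ 1) {A : Finset (Fin d → Bool)}
    (hA : Percolates d 3 A) :
    ∃ B : Finset (Fin (d + 3) → Bool), #B ≤ #A + (d + 3) ∧ Percolates (d + 3) 3 B := by
  obtain ⟨K, rfl | hK⟩ := Nat.even_or_odd' d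
  · exact exists_percolating_even hA
  · obtain ⟨K, rfl⟩ : ∃ K', d = 2 * K' + 3 := ⟨K - 1, by omega⟩
    exact exists_percolating_odd hA

set_option maxRecDepth 10000 in
lemma exists_percolating_card_le (hd : 3 ≤ d) :
    ∃ A : Finset (Fin d → Bool), #A ≤ (d * (d + 3) + 5) / 6 + 1 ∧ Percolates d 3 A := by
  induction d using Nat.strong_induction_on with
  | _ d ih =>
  rcases lt_or_ge d 6 with hd6 | hd6
  · interval_cases d
    · exact ⟨{![false, false, false], ![true, true, false], ![true, false, true],
        ![false, true, true]}, by decide, 1, by decide⟩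
    · exact ⟨{![false, false, false, false], ![true, true, false, false],
        ![true, false, true, false], ![false, true, false, true], ![false, false, true, true],
        ![true, true, true, true]}, by decide, 2, by decide⟩
    · exact ⟨{![false, false, false, false, false], ![true, false, false, false, false],
        ![false, true, true, false, false], ![false, true, false, true, false],
        ![true, false, true, true, false], ![true, true, false, false, true],
        ![false, false, true, false, true], ![false, false, false, true, true]},
        by decide, 5, by decide⟩
  obtain ⟨e, rfl⟩ : ∃ e, d = e + 3 := ⟨d - 3, by omega⟩
  obtain ⟨A, hA, hAp⟩ := ih e (by omega) (by omega)
  obtain ⟨B, hB, hBp⟩ := exists_percolating_add_three (by omega) hAp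
  refine ⟨B, hB.trans ?_, hBp⟩
  have : (e + 3) * (e + 3 + 3) = e * (e + 3) + 6 * (e + 3) := by ring
  rw [this]
  generalize e * (e + 3) = q at hA ⊢
  omega

end Bootstrap

/-- For all `d ≥ 3`, `m(Q_d; 3) ≤ ⌈d(d+3)/6⌉ + 1`. -/
theorem stmt11 (d : ℕ) (hd : 3 ≤ d) : mQ d 3 ≤ (d * (d + 3) + 5) / 6 + 1 := by
  obtain ⟨A, hA, hAp⟩ := Bootstrap.exists_percolating_card_le hd
  have hmin : mQ d 3 ≤ #A := Nat.sInf_le ⟨A, rfl, hAp⟩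
  exact hmin.trans hA
end

section
/- If d ≡ 4 (mod 6), d ≥ 10, and m(Q_{d-4};4) ≤ ((d-4)((d-4)^2+3(d-4)+14))/24 + 1, and there exist nested sets S_1 ⊆ S_2 ⊆ S_3 in Q_{d-4} percolating for the 1-, 2- and 3-neighbour processes respectively with |S_1| = 1, |S_2| = (d-4)/2 + 1, |S_3| = (d-4)(d-1)/6 + 1, then m(Q_d;4) ≤ d(d^2+3d+14)/24 + 1. -/
open Finset

/-! Split `Q_{n+4}` into the sixteen subcubes `Q_n × {x}`, `x ∈ Q_4`. Seed the subcube of `0000`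
with a minimum 4-percolating set `T` of `Q_n`, the subcubes of `1100, 1010, 1001` with `S₃`, those
of `0110, 0101, 0011` with `S₂`, and that of `1111` with `S₁`. Each vertex of a subcube has exactly
one neighbour in each of the four adjacent subcubes. Hence a subcube holding an infected copy of an
`r`-percolating set fills up once `4 - r` adjacent subcubes are full, and a subcube receives an
infected copy of `S` once four adjacent subcubes hold one. Starting from `0000`, these two rules
fill `Q_4` subcube by subcube, so `m(Q_{n+4}; 4) ≤ m(Q_n; 4) + 3|S₃| + 3|S₂| + |S₁|`. Finally
`(n+4)((n+4)² + 3(n+4) + 14) = n(n² + 3n + 14) + 24 (n(n+3)/2 + 3n/2 + 7)`, and for `6 ∣ n` the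
increment `n(n+3)/2 + 3n/2 + 7` is exactly `3|S₃| + 3|S₂| + |S₁|`. -/

namespace Hypercube

variable {d r : ℕ}

inductive Infected (d r : ℕ) (A : Finset (Fin d → Bool)) : (Fin d → Bool) → Prop
  | seed {v} : v ∈ A → Infected d r A v
  | spread {v} (N : Finset (Fin d → Bool)) : (∀ w ∈ N, hammingDist v w = 1) → r ≤ #N →
      (∀ w ∈ N, Infected d r A w) → Infected d r A v

lemma monotone_iterate_bootStep (A : Finset (Fin d → Bool)) :
    Monotone fun t => (bootStep d r)^[t] A :=
  monotone_nat_of_le_succ fun t => by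
    rw [Function.iterate_succ_apply']
    exact subset_union_left

lemma infected_of_mem_iterate {A : Finset (Fin d → Bool)} {v : Fin d → Bool} {t : ℕ}
    (h : v ∈ (bootStep d r)^[t] A) : Infected d r A v := by
  induction t generalizing v with
  | zero => exact .seed h
  | succ t ih =>
    rw [Function.iterate_succ_apply', bootStep, mem_union, mem_filter] at h
    obtain h | ⟨-, hr⟩ := h
    · exact ih h
    · exact .spread _ (fun w hw => (mem_filter.mp (mem_inter.mp hw).1).2) hr
        fun w hw => ih (mem_inter.mp hw).2

lemma Infected.exists_mem_iterate {A : Finset (Fin d → Bool)} {v : Fin d → Bool}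
    (h : Infected d r A v) : ∃ t, v ∈ (bootStep d r)^[t] A := by
  induction h with
  | seed hv => exact ⟨0, hv⟩
  | spread N hadj hcard _ ih =>
    choose! t ht using ih
    refine ⟨N.sup t + 1, ?_⟩
    rw [Function.iterate_succ_apply']
    refine mem_union_right _
      (mem_filter.mpr ⟨mem_univ _, hcard.trans (card_le_card fun w hw => ?_)⟩)
    exact mem_inter.mpr ⟨mem_filter.mpr ⟨mem_univ _, hadj w hw⟩,
      monotone_iterate_bootStep A (le_sup hw) (ht w hw)⟩

theorem percolates_iff_forall_infected {A : Finset (Fin d → Bool)} :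
    Percolates d r A ↔ ∀ v, Infected d r A v := by
  refine ⟨fun ⟨t, ht⟩ v => infected_of_mem_iterate (t := t) (ht ▸ mem_univ v),
    fun h => ?_⟩
  choose t ht using fun v => (h v).exists_mem_iterate
  exact ⟨univ.sup t, eq_univ_of_forall fun v =>
    monotone_iterate_bootStep A (le_sup (mem_univ v)) (ht v)⟩

lemma exists_percolates_card_eq_mQ (d r : ℕ) : ∃ A, #A = mQ d r ∧ Percolates d r A :=
  Nat.sInf_mem (s := {n | ∃ A : Finset (Fin d → Bool), #A = n ∧ Percolates d r A})
    ⟨_, univ, rfl, 0, rfl⟩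

lemma mQ_le_card {A : Finset (Fin d → Bool)} (h : Percolates d r A) : mQ d r ≤ #A :=
  Nat.sInf_le ⟨A, rfl, h⟩

section Subcube

variable {n m : ℕ}

variable {α : Type*} [DecidableEq α]

lemma hammingDist_append (u u' : Fin n → α) (x x' : Fin m → α) :
    hammingDist (Fin.append u x) (Fin.append u' x') = hammingDist u u' + hammingDist x x' := by
  simp only [hammingDist, card_filter, Fin.sum_univ_add, Fin.append_left, Fin.append_right]

lemma append_ne_append_of_hammingDist_eq_one {u u' : Fin n → α} {x x' : Fin m → α}
    (h : hammingDist x x' = 1) : Fin.append u x ≠ Fin.append u' x' := fun he => by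
  have := hammingDist_append u u' x x'
  rw [he, hammingDist_self] at this
  omega

lemma append_left_injective (x : Fin m → α) :
    Function.Injective fun u : Fin n → α => Fin.append u x := fun u u' he => by
  simpa [hammingDist_append] using congrArg (hammingDist (Fin.append u x)) he

lemma append_right_injective (u : Fin n → α) :
    Function.Injective (Fin.append u : (Fin m → α) → Fin (n + m) → α) := fun x x' he => by
  simpa [hammingDist_append] using congrArg (hammingDist (Fin.append u x)) he

variable (A : Finset (Fin (n + m) → Bool)) (r : ℕ)

def CopyInfected (S : Finset (Fin n → Bool)) (x : Fin m → Bool) : Prop :=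
  ∀ u ∈ S, Infected (n + m) r A (Fin.append u x)

abbrev SubcubeInfected (x : Fin m → Bool) : Prop := CopyInfected A r univ x

variable {A r}

lemma SubcubeInfected.copyInfected {x : Fin m → Bool} (h : SubcubeInfected A r x)
    (S : Finset (Fin n → Bool)) : CopyInfected A r S x :=
  fun u _ => h u (mem_univ u)

lemma copyInfected_of_neighbours {S : Finset (Fin n → Bool)} {x : Fin m → Bool}
    (K : Finset (Fin m → Bool)) (hK : ∀ y ∈ K, CopyInfected A r S y)
    (hcard : r ≤ #{y ∈ K | hammingDist x y = 1}) : CopyInfected A r S x := by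
  intro u hu
  refine .spread ({y ∈ K | hammingDist x y = 1}.image (Fin.append u)) ?_ ?_ ?_
  · simp only [mem_image, mem_filter]
    rintro _ ⟨y, ⟨-, hy⟩, rfl⟩
    rw [hammingDist_append, hammingDist_self, hy]
  · rwa [card_image_of_injective _ (append_right_injective u)]
  · simp only [mem_image, mem_filter]
    rintro _ ⟨y, ⟨hyK, -⟩, rfl⟩
    exact hK y hyK u hu

lemma subcubeInfected_of_copyInfected {r' : ℕ} {S : Finset (Fin n → Bool)} {x : Fin m → Bool}
    (hS : Percolates n r' S) (hx : CopyInfected A r S x)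
    (K : Finset (Fin m → Bool)) (hK : ∀ y ∈ K, SubcubeInfected A r y)
    (hcard : r ≤ r' + #{y ∈ K | hammingDist x y = 1}) : SubcubeInfected A r x := by
  rintro u -
  induction percolates_iff_forall_infected.mp hS u with
  | seed hu => exact hx _ hu
  | @spread u N hadj hN _ ih =>
    set F := {y ∈ K | hammingDist x y = 1}
    have hdisj : Disjoint (N.image (Fin.append · x)) (F.image (Fin.append u)) := by
      simp only [disjoint_left, mem_image, mem_filter, F]
      rintro _ ⟨w, -, rfl⟩ ⟨y, ⟨-, hy⟩, he⟩
      exact append_ne_append_of_hammingDist_eq_one hy he.symm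
    refine .spread (N.image (Fin.append · x) ∪ F.image (Fin.append u)) ?_ ?_ ?_
    · simp only [mem_union, mem_image, mem_filter, F]
      rintro _ (⟨w, hw, rfl⟩ | ⟨y, ⟨-, hy⟩, rfl⟩)
      · rw [hammingDist_append, hammingDist_self, hadj w hw]
      · rw [hammingDist_append, hammingDist_self, hy]
    · rw [card_union_of_disjoint hdisj, card_image_of_injective _ (append_left_injective x),
        card_image_of_injective _ (append_right_injective u)]
      omega
    · simp only [mem_union, mem_image, mem_filter, F]
      rintro _ (⟨w, hw, rfl⟩ | ⟨y, ⟨hyK, -⟩, rfl⟩)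
      · exact ih w hw
      · exact hK y hyK u (mem_univ u)

lemma subcubeInfected_of_neighbours {r' : ℕ} {S : Finset (Fin n → Bool)} {x : Fin m → Bool}
    (hS : Percolates n r' S) (K K' : Finset (Fin m → Bool))
    (hK : ∀ y ∈ K, SubcubeInfected A r y) (hK' : ∀ y ∈ K', CopyInfected A r S y)
    (hcopy : r ≤ #{y ∈ K ∪ K' | hammingDist x y = 1})
    (hfill : r ≤ r' + #{y ∈ K | hammingDist x y = 1}) : SubcubeInfected A r x :=
  subcubeInfected_of_copyInfected hS (copyInfected_of_neighbours (K ∪ K')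
    (forall_mem_union.mpr ⟨fun y hy => (hK y hy).copyInfected S, hK'⟩) hcopy) K hK hfill

lemma percolates_of_forall_subcubeInfected
    (h : ∀ x, SubcubeInfected A r x) : Percolates (n + m) r A :=
  percolates_iff_forall_infected.mpr fun v =>
    Fin.append_castAdd_natAdd (f := v) ▸ h _ _ (mem_univ _)

def seeds (S : (Fin m → Bool) → Finset (Fin n → Bool)) : Finset (Fin (n + m) → Bool) :=
  univ.biUnion fun x => (S x).image (Fin.append · x)

lemma card_seeds_le (S : (Fin m → Bool) → Finset (Fin n → Bool)) :
    #(seeds S) ≤ ∑ x, #(S x) :=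
  card_biUnion_le.trans (sum_le_sum fun _ _ => card_image_le)

lemma copyInfected_seeds (S : (Fin m → Bool) → Finset (Fin n → Bool)) (r : ℕ)
    (x : Fin m → Bool) : CopyInfected (seeds S) r (S x) x :=
  fun _ hu => .seed (mem_biUnion.mpr ⟨x, mem_univ x, mem_image_of_mem _ hu⟩)

end Subcube

def label (x : Fin 4 → Bool) : ℕ :=
  match x 0, x 1, x 2, x 3 with
  | false, false, false, false => 4
  | true, true, false, false | true, false, true, false | true, false, false, true => 3
  | false, true, true, false | false, true, false, true | false, false, true, true => 2
  | true, true, true, true => 1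
  | _, _, _, _ => 0

section Labelling

variable {n : ℕ}

def labelSeeds (T S₃ S₂ S₁ : Finset (Fin n → Bool)) : ℕ → Finset (Fin n → Bool)
  | 4 => T
  | 3 => S₃
  | 2 => S₂
  | 1 => S₁
  | _ => ∅

lemma sum_card_labelSeeds (T S₃ S₂ S₁ : Finset (Fin n → Bool)) :
    ∑ x, #(labelSeeds T S₃ S₂ S₁ (label x)) = #T + 3 * #S₃ + 3 * #S₂ + #S₁ := by
  have h₁ : #{x | label x = 1} = 1 := by decide
  have h₂ : #{x | label x = 2} = 3 := by decide
  have h₃ : #{x | label x = 3} = 3 := by decide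
  have h₄ : #{x | label x = 4} = 1 := by decide
  rw [sum_comp (fun j => #(labelSeeds T S₃ S₂ S₁ j)) label,
    show univ.image label = {0, 1, 2, 3, 4} by decide, sum_insert (by decide),
    sum_insert (by decide), sum_insert (by decide), sum_insert (by decide), sum_singleton]
  simp only [labelSeeds, h₁, h₂, h₃, h₄, card_empty, smul_eq_mul]
  ring

theorem percolates_seeds_label {T S₃ S₂ S₁ : Finset (Fin n → Bool)} (hT : Percolates n 4 T)
    (h₃ : Percolates n 3 S₃) (h₂ : Percolates n 2 S₂) (h₁ : Percolates n 1 S₁) :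
    Percolates (n + 4) 4 (seeds fun x => labelSeeds T S₃ S₂ S₁ (label x)) := by
  set A := seeds fun x => labelSeeds T S₃ S₂ S₁ (label x)
  let L (j : ℕ) : Finset (Fin 4 → Bool) := {y | label y = j}
  have hL (j : ℕ) : ∀ y ∈ L j, CopyInfected A 4 (labelSeeds T S₃ S₂ S₁ j) y :=
    fun y hy => (mem_filter.mp hy).2 ▸ copyInfected_seeds _ 4 y
  let W₁ : Finset (Fin 4 → Bool) :=
    {![false, true, false, false], ![false, false, true, false], ![false, false, false, true]}
  let W₃ : Finset (Fin 4 → Bool) := {![true, true, true, false], ![true, true, false, true],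
    ![true, false, true, true], ![false, true, true, true]}
  have hK₀ : ∀ y ∈ L 4, SubcubeInfected A 4 y := fun y hy =>
    subcubeInfected_of_copyInfected hT (hL 4 y hy) ∅ (by simp) (by simp)
  let K₁ := insert ![true, false, false, false] (L 4)
  have hK₁ : ∀ y ∈ K₁, SubcubeInfected A 4 y := forall_mem_insert _ _ _ |>.mpr
    ⟨subcubeInfected_of_neighbours h₃ (L 4) (L 3) hK₀ (hL 3) (by decide) (by decide), hK₀⟩
  have hK₂ : ∀ y ∈ K₁ ∪ L 3, SubcubeInfected A 4 y :=
    forall_mem_union.mpr ⟨hK₁, fun y hy =>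
      subcubeInfected_of_copyInfected h₃ (hL 3 y hy) K₁ hK₁ (by revert y; decide)⟩
  have hK₃ : ∀ y ∈ K₁ ∪ L 3 ∪ W₁, SubcubeInfected A 4 y :=
    forall_mem_union.mpr ⟨hK₂, fun y hy => subcubeInfected_of_neighbours h₂ _ (L 2) hK₂ (hL 2)
      (by revert y; decide) (by revert y; decide)⟩
  have hK₄ : ∀ y ∈ K₁ ∪ L 3 ∪ W₁ ∪ L 2, SubcubeInfected A 4 y :=
    forall_mem_union.mpr ⟨hK₃, fun y hy =>
      subcubeInfected_of_copyInfected h₂ (hL 2 y hy) _ hK₃ (by revert y; decide)⟩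
  have hK₅ : ∀ y ∈ K₁ ∪ L 3 ∪ W₁ ∪ L 2 ∪ W₃, SubcubeInfected A 4 y :=
    forall_mem_union.mpr ⟨hK₄, fun y hy => subcubeInfected_of_neighbours h₁ _ (L 1) hK₄ (hL 1)
      (by revert y; decide) (by revert y; decide)⟩
  have hK₆ : ∀ y ∈ K₁ ∪ L 3 ∪ W₁ ∪ L 2 ∪ W₃ ∪ L 1, SubcubeInfected A 4 y :=
    forall_mem_union.mpr ⟨hK₅, fun y hy =>
      copyInfected_of_neighbours _ hK₅ (by revert y; decide)⟩
  exact percolates_of_forall_subcubeInfected fun x => hK₆ x (by revert x; decide)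

theorem mQ_add_four_le {S₃ S₂ S₁ : Finset (Fin n → Bool)} (h₃ : Percolates n 3 S₃)
    (h₂ : Percolates n 2 S₂) (h₁ : Percolates n 1 S₁) :
    mQ (n + 4) 4 ≤ mQ n 4 + 3 * #S₃ + 3 * #S₂ + #S₁ := by
  obtain ⟨T, hTcard, hT⟩ := exists_percolates_card_eq_mQ n 4
  calc mQ (n + 4) 4 ≤ #(seeds fun x => labelSeeds T S₃ S₂ S₁ (label x)) :=
        mQ_le_card (percolates_seeds_label hT h₃ h₂ h₁)
    _ ≤ #T + 3 * #S₃ + 3 * #S₂ + #S₁ :=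
        sum_card_labelSeeds T S₃ S₂ S₁ ▸ card_seeds_le _
    _ = mQ n 4 + 3 * #S₃ + 3 * #S₂ + #S₁ := by rw [hTcard]

end Labelling

lemma bound_add_four {n : ℕ} (hn : 6 ∣ n) :
    n * (n ^ 2 + 3 * n + 14) / 24 + 1 + 3 * (n * (n + 3) / 6 + 1) + 3 * (n / 2 + 1) + 1 =
      (n + 4) * ((n + 4) ^ 2 + 3 * (n + 4) + 14) / 24 + 1 := by
  obtain ⟨k, rfl⟩ := hn
  have h₆ : 6 * k * (6 * k + 3) / 6 = k * (6 * k + 3) := by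
    rw [mul_assoc]; exact Nat.mul_div_cancel_left _ (by norm_num)
  have h₂₄ : (6 * k + 4) * ((6 * k + 4) ^ 2 + 3 * (6 * k + 4) + 14) =
      6 * k * ((6 * k) ^ 2 + 3 * (6 * k) + 14) + 24 * (3 * k * (6 * k + 3) + 9 * k + 7) := by
    ring
  rw [h₆, h₂₄, Nat.add_mul_div_left _ _ (by norm_num), show 6 * k / 2 = 3 * k by omega]
  ring

end Hypercube

theorem stmt12_general (d : ℕ) (hmod : d % 6 = 4)
    (h4 : mQ (d - 4) 4 ≤ (d - 4) * ((d - 4) ^ 2 + 3 * (d - 4) + 14) / 24 + 1)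
    (h3 : ∃ S₁ S₂ S₃ : Finset (Fin (d - 4) → Bool),
      S₁ ⊆ S₂ ∧ S₂ ⊆ S₃ ∧
      S₁.card = 1 ∧ S₂.card = (d - 4) / 2 + 1 ∧
      S₃.card = (d - 4) * (d - 1) / 6 + 1 ∧
      Percolates (d - 4) 1 S₁ ∧ Percolates (d - 4) 2 S₂ ∧
      Percolates (d - 4) 3 S₃) :
    mQ d 4 ≤ d * (d ^ 2 + 3 * d + 14) / 24 + 1 := by
  obtain ⟨n, rfl⟩ : ∃ n, d = n + 4 := ⟨d - 4, by omega⟩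
  rw [Nat.add_sub_cancel] at h4 h3
  rw [show n + 4 - 1 = n + 3 by omega] at h3
  obtain ⟨S₁, S₂, S₃, -, -, hc₁, hc₂, hc₃, h₁, h₂, h₃⟩ := h3
  calc mQ (n + 4) 4 ≤ mQ n 4 + 3 * #S₃ + 3 * #S₂ + #S₁ :=
      Hypercube.mQ_add_four_le h₃ h₂ h₁
    _ ≤ n * (n ^ 2 + 3 * n + 14) / 24 + 1 + 3 * (n * (n + 3) / 6 + 1) + 3 * (n / 2 + 1) + 1 := by
      rw [hc₃, hc₂, hc₁]; omega
    _ = _ := Hypercube.bound_add_four (by omega)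

/-- Inductive step of the main theorem for `d ≡ 4 (mod 6)`, `d ≥ 10`.
All displayed natural-number divisions are exact. -/
theorem stmt12 (d : ℕ) (hd : 10 ≤ d) (hmod : d % 6 = 4)
    (h4 : mQ (d - 4) 4 ≤ (d - 4) * ((d - 4) ^ 2 + 3 * (d - 4) + 14) / 24 + 1)
    (h3 : ∃ S₁ S₂ S₃ : Finset (Fin (d - 4) → Bool),
      S₁ ⊆ S₂ ∧ S₂ ⊆ S₃ ∧
      S₁.card = 1 ∧ S₂.card = (d - 4) / 2 + 1 ∧
      S₃.card = (d - 4) * (d - 1) / 6 + 1 ∧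
      Percolates (d - 4) 1 S₁ ∧ Percolates (d - 4) 2 S₂ ∧
      Percolates (d - 4) 3 S₃) :
    mQ d 4 ≤ d * (d ^ 2 + 3 * d + 14) / 24 + 1 :=
  stmt12_general d hmod h4 h3
end

section
/- For d = 5, the lower bound formula d(d²+3d+14)/24 + 1 evaluates to 59/4 + 1, whose ceiling is 13, and the paper's construction shows m(Q_5;4) ≤ 14; hence the set S_4^5 of 14 explicitly listed vertices percolates under the 4-neighbour bootstrap process on Q_5. -/
open Finset

/-- The explicit 14-element set `S_4^5` of vertices of `Q_5`. -/
def S45 : Finset (Fin 5 → Bool) :=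
  {
    ![false, false, false, false, true], ![false, false, true, false, false],
    ![false, false, true, true, true], ![false, true, false, true, false],
    ![false, true, false, true, true], ![false, true, true, false, true],
    ![false, true, true, true, false], ![true, false, false, false, false],
    ![true, false, false, true, true], ![true, false, true, false, true],
    ![true, false, true, true, false], ![true, true, false, false, true],
    ![true, true, false, true, false], ![true, true, true, false, false]}

/-! After one round of the 4-neighbour process, `S45` has infected every vertex of `Q_5` except
`00000`, `00010`, `01000` and `11111`; after the second round only `00000` is still healthy, and
all five of its neighbours are infected. -/

theorem mQ_le_card {d r : ℕ} {A : Finset (Fin d → Bool)} (hA : Percolates d r A) :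
    mQ d r ≤ #A :=
  Nat.sInf_le ⟨A, rfl, hA⟩

theorem hammingDist_update_not {d : ℕ} (v : Fin d → Bool) (i : Fin d) :
    hammingDist v (Function.update v i (!v i)) = 1 := by
  rw [hammingDist, card_eq_one]
  refine ⟨i, ext fun j => ?_⟩
  by_cases h : j = i <;> simp [h, Function.update_of_ne]

theorem exists_update_not_eq_of_hammingDist_eq_one {d : ℕ} {v w : Fin d → Bool}
    (h : hammingDist v w = 1) : ∃ i, Function.update v i (!v i) = w := by
  obtain ⟨i, hi⟩ := card_eq_one.mp h
  refine ⟨i, funext fun j => ?_⟩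
  have hj := Finset.ext_iff.mp hi j
  simp only [mem_filter, mem_univ, true_and, mem_singleton] at hj
  by_cases hji : j = i
  · subst hji
    rw [Function.update_self]
    exact (Bool.eq_not_iff.mpr (Ne.symm (hj.mpr rfl))).symm
  · rw [Function.update_of_ne hji]
    simpa [hji] using hj

theorem card_hammingDist_eq_one {d : ℕ} (v : Fin d → Bool) :
    #{w | hammingDist v w = 1} = d := by
  have hinj : Function.Injective fun i => Function.update v i (!v i) := by
    intro i j hij
    by_contra hne
    simpa [Function.update_of_ne hne] using congrFun hij i
  calc #{w | hammingDist v w = 1}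
      = #(univ.image fun i => Function.update v i (!v i)) := by
        congr 1
        ext w
        simp only [mem_filter, mem_univ, true_and, mem_image]
        exact ⟨exists_update_not_eq_of_hammingDist_eq_one,
          fun ⟨i, hi⟩ => hi ▸ hammingDist_update_not v i⟩
    _ = d := by rw [card_image_of_injective _ hinj, card_univ, Fintype.card_fin]

theorem bootStep_univ_erase {d r : ℕ} (hr : r ≤ d) (v : Fin d → Bool) :
    bootStep d r (univ.erase v) = univ := by
  refine eq_univ_of_forall fun w => ?_
  by_cases hw : w = v
  · subst hw
    refine mem_union_right _ (mem_filter.mpr ⟨mem_univ _, ?_⟩)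
    rw [inter_eq_left.mpr fun u hu => mem_erase.mpr ⟨fun h => ?_, mem_univ u⟩,
      card_hammingDist_eq_one]
    · exact hr
    · simp [h] at hu
  · exact mem_union_left _ (mem_erase.mpr ⟨hw, mem_univ w⟩)

theorem bootStep_S45 :
    bootStep 5 4 S45 = univ \ {![false, false, false, false, false],
      ![false, false, false, true, false], ![false, true, false, false, false],
      ![true, true, true, true, true]} := by
  decide

theorem bootStep_iterate_two_S45 :
    (bootStep 5 4)^[2] S45 = univ.erase ![false, false, false, false, false] := by
  rw [Function.iterate_succ_apply', Function.iterate_one, bootStep_S45]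
  decide

theorem percolates_S45 : Percolates 5 4 S45 :=
  ⟨3, by
    rw [Function.iterate_succ_apply', bootStep_iterate_two_S45, bootStep_univ_erase (by norm_num)]⟩

/-- The lower-bound formula at `d = 5` evaluates to `45/4 + 1`, whose ceiling is `13`;
the set `S_4^5` has cardinality 14 and percolates under the 4-neighbour bootstrap
process on `Q_5`, whence `m(Q_5; 4) ≤ 14`. -/
theorem stmt18 :
    ((5 * (5 ^ 2 + 3 * 5 + 14) : ℚ) / 24 + 1 = 45 / 4 + 1) ∧
    (⌈(45 / 4 + 1 : ℚ)⌉ = 13) ∧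
    S45.card = 14 ∧ Percolates 5 4 S45 ∧ mQ 5 4 ≤ 14 := by
  have hcard : #S45 = 14 := by decide
  refine ⟨by norm_num, by norm_num [Int.ceil_eq_iff], hcard, percolates_S45, ?_⟩
  exact hcard ▸ mQ_le_card percolates_S45
end

section
/- The set S_4^6 of 18 explicitly listed vertices of Q_6 percolates under the 4-neighbour bootstrap process on Q_6; consequently m(Q_6;4) ≤ 18 = 6(6²+3·6+14)/24 + 1. -/
open Finset

/-- The explicit 18-element set `S_4^6` of vertices of `Q_6`. -/
def S46 : Finset (Fin 6 → Bool) :=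
  {
    ![true, false, false, false, false, true], ![true, false, false, false, true, false],
    ![false, false, false, false, true, true], ![false, false, false, true, false, false],
    ![true, false, false, true, true, true], ![false, false, true, false, true, false],
    ![true, false, true, true, false, true], ![true, false, true, true, true, false],
    ![true, true, false, false, false, false], ![false, true, false, false, true, false],
    ![true, true, false, true, false, true], ![true, true, false, true, true, false],
    ![false, true, false, true, true, true], ![false, true, true, false, false, false],
    ![true, true, true, false, true, true], ![true, true, true, true, false, false],
    ![false, true, true, true, false, true], ![false, true, true, true, true, false]}

set_option maxRecDepth 100000 in
set_option maxHeartbeats 4000000 in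
/-- `S_4^6` percolates under the 4-neighbour bootstrap process on `Q_6`;
consequently `m(Q_6; 4) ≤ 18 = 6·(6²+3·6+14)/24 + 1`. -/
theorem stmt19 :
    S46.card = 18 ∧ Percolates 6 4 S46 ∧ mQ 6 4 ≤ 18 ∧
    18 = 6 * (6 ^ 2 + 3 * 6 + 14) / 24 + 1 := by
  have hc : S46.card = 18 := by decide
  have hp : Percolates 6 4 S46 := ⟨6, by decide⟩
  exact ⟨hc, hp, Nat.sInf_le ⟨S46, hc, hp⟩, by norm_num⟩
end
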